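/- arXiv:2404.11028 — 4 statements merged into one kernel-verified Lean document; each statement's English description precedes it below -/
import Mathlib

section
/- Let k ≥ 0 be an integer and let n be an integer with 3·2^k ≤ n ≤ 3·2^{k+1}. Then every triangulation T of the n-gon satisfies TCL(T) ≥ n(k+2) − 3·2^{k+1}. -/
open scoped Classical

/-- The cyclic distance between two vertices of the `n`-gon labeled by `ZMod n`:
`min (k, n - k)` where `k` is the representative of `b - a`. -/
def cycDist {n : ℕ} (a b : ZMod n) : ℕ := min (b - a).val (a - b).val

/-- The length of an unordered pair of vertices (in particular, of a chord). -/
def chordLen {n : ℕ} (p : Sym2 (ZMod n)) : ℕ :=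
  Sym2.lift ⟨fun a b => cycDist a b, fun _ _ => min_comm _ _⟩ p

/-- `x` lies strictly inside the clockwise arc from `a` to `b`. -/
def InArc {n : ℕ} (a b x : ZMod n) : Prop :=
  0 < (x - a).val ∧ (x - a).val < (b - a).val

/-- Two chords cross: their four endpoints are distinct and exactly one endpoint of the
second chord lies strictly inside the clockwise arc from `a` to `b`. -/
def Crosses {n : ℕ} (p q : Sym2 (ZMod n)) : Prop :=
  ∃ a b c d : ZMod n, p = s(a, b) ∧ q = s(c, d) ∧
    a ≠ b ∧ a ≠ c ∧ a ≠ d ∧ b ≠ c ∧ b ≠ d ∧ c ≠ d ∧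
    Xor' (InArc a b c) (InArc a b d)

/-- A triangulation of the `n`-gon: a set of `n - 3` pairwise non-crossing chords
(each chord having length at least 2). -/
def IsTriangulation (n : ℕ) (T : Finset (Sym2 (ZMod n))) : Prop :=
  T.card = n - 3 ∧ (∀ p ∈ T, 2 ≤ chordLen p) ∧
    ∀ p ∈ T, ∀ q ∈ T, p ≠ q → ¬ Crosses p q

/-- The total chord length of a triangulation. -/
def TCL (n : ℕ) (T : Finset (Sym2 (ZMod n))) : ℕ := ∑ p ∈ T, chordLen p

/-- A diameter is a chord of length `n / 2` (only possible for `n` even). -/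
def IsDiameter {n : ℕ} (p : Sym2 (ZMod n)) : Prop := 2 * chordLen p = n

/-- The chord `p` layers the boundary edge `{i, i + 1}`: the edge lies on the (strictly)
shorter of the two arcs between the endpoints of `p`.  (Diameters never layer an edge.) -/
def LayersEdge {n : ℕ} (p : Sym2 (ZMod n)) (i : ZMod n) : Prop :=
  ∃ a b : ZMod n, p = s(a, b) ∧ (b - a).val < (a - b).val ∧ (i - a).val < (b - a).val

/-- The doubled layer number of the boundary edge `{i, i + 1}`:
twice the number of non-diameter chords layering it, plus the number of diameters. -/
noncomputable def mT (n : ℕ) (T : Finset (Sym2 (ZMod n))) (i : ZMod n) : ℕ :=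
  2 * (T.filter (fun p => LayersEdge p i ∧ ¬ IsDiameter p)).card +
    (T.filter (fun p => IsDiameter p)).card

/-- Subdivision of a triangulation of the `n`-gon at the boundary edge `{n-1, 0}`:
re-embed all chords (via representatives in `{0, …, n-1}`) into the `(n+1)`-gon, whose new
vertex `n` lies between `n - 1` and `0`, and add the chord `{n - 1, 0}`. -/
def subdiv (n : ℕ) (T : Finset (Sym2 (ZMod n))) : Finset (Sym2 (ZMod (n + 1))) :=
  T.image (Sym2.map (fun a : ZMod n => ((a.val : ℕ) : ZMod (n + 1)))) ∪
    {s(((n - 1 : ℕ) : ZMod (n + 1)), (0 : ZMod (n + 1)))}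

/-- Doubling construction: subdivide every boundary edge of the `m`-gon (old vertex `a`
becomes `2a` in the `2m`-gon) and add the chord `{2a, 2a+2}` over each new vertex. -/
def doubleTri (m : ℕ) (T : Finset (Sym2 (ZMod m))) : Finset (Sym2 (ZMod (2 * m))) :=
  T.image (Sym2.map (fun a : ZMod m => ((2 * a.val : ℕ) : ZMod (2 * m)))) ∪
    (Finset.range m).image
      (fun a : ℕ => s(((2 * a : ℕ) : ZMod (2 * m)), ((2 * a + 2 : ℕ) : ZMod (2 * m))))

/-!
Write `m i = mT n T i` for the doubled layer number of the boundary edge `i`. A non-diameter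
chord of length `ℓ` layers exactly `ℓ` edges and a diameter adds `1` to every `m i`, so
`∑ i, m i = 2 * TCL n T`, and it suffices to bound the total deficit `∑ i, (2k + 4 - m i)` by
`3 * 2 ^ (k + 2)`.

The sets of edges layered by the non-diameter chords form a laminar family, that is, a forest
whose leaves are the edges. A triangulation has the largest possible number `n - 3` of chords,
and counting parents shows that the forest is then binary: the whole polygon has three
branches, or, when there is a diameter, each half of the polygon carries a binary tree.
Recursing down from a node with `b` branches bounds `∑ (c - 2 * depth)` over the leaves below
it by `b * layerBound c`, and `layerBound (2k + 4) ≤ 2 ^ (k + 2)`, `layerBound (2k + 3) ≤ 3 * 2 ^ k`.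
-/

open Finset

/-- A leaf below a node contributes at most `c` to `∑ (c - 2 * depth)`, a subtree at most
`2 * layerBound (c - 2)`. -/
def layerBound : ℕ → ℕ
  | 0 => 0
  | 1 => 1
  | c + 2 => max (c + 2) (2 * layerBound c)

theorem le_layerBound : ∀ c, c ≤ layerBound c
  | 0 => le_rfl
  | 1 => le_rfl
  | _ + 2 => le_max_left _ _

theorem two_mul_layerBound_sub_two_le : ∀ c, 2 * layerBound (c - 2) ≤ layerBound c
  | 0 => le_rfl
  | 1 => by simp [layerBound]
  | _ + 2 => le_max_right _ _

theorem layerBound_even_le (j : ℕ) : layerBound (2 * j + 2) ≤ 2 ^ (j + 1) := by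
  induction j with
  | zero => simp [layerBound]
  | succ j ih =>
    have := Nat.lt_two_pow_self (n := j + 1)
    rw [show 2 * (j + 1) + 2 = 2 * j + 2 + 2 by ring, layerBound, pow_succ]
    exact max_le (by omega) (by omega)

theorem layerBound_odd_le (j : ℕ) : layerBound (2 * j + 3) ≤ 3 * 2 ^ j := by
  induction j with
  | zero => simp [layerBound]
  | succ j ih =>
    have := Nat.lt_two_pow_self (n := j)
    rw [show 2 * (j + 1) + 3 = 2 * j + 3 + 2 by ring, layerBound, pow_succ]
    exact max_le (by omega) (by omega)

section LaminarFamily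

variable {α : Type*} [DecidableEq α]

def IsLaminar (𝒜 : Finset (Finset α)) : Prop :=
  ∀ A ∈ 𝒜, ∀ B ∈ 𝒜, A ⊆ B ∨ B ⊆ A ∨ Disjoint A B

namespace Laminar

variable (𝒜 : Finset (Finset α)) (E : Finset α)

/-! `𝒜` is read as a forest: the branches of a node `E` are its children, the maximal members
of `𝒜` strictly inside `E`, and the points of `E` they leave uncovered, which are leaves. -/

def descendants : Finset (Finset α) := 𝒜.filter (· ⊂ E)

noncomputable def children : Finset (Finset α) :=
  (descendants 𝒜 E).filter (Maximal (· ∈ descendants 𝒜 E))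

noncomputable def uncovered : Finset α := E \ (children 𝒜 E).biUnion id

noncomputable def degree : ℕ := #(uncovered 𝒜 E) + #(children 𝒜 E)

def depth (i : α) : ℕ := #((descendants 𝒜 E).filter (i ∈ ·))

variable {𝒜 E} {A C F : Finset α}

theorem mem_descendants : A ∈ descendants 𝒜 E ↔ A ∈ 𝒜 ∧ A ⊂ E := mem_filter

theorem descendants_mono (h : F ⊆ E) : descendants 𝒜 F ⊆ descendants 𝒜 E := fun _ hA ↦
  mem_descendants.2
    ⟨(mem_descendants.1 hA).1, _root_.ssubset_of_ssubset_of_subset (mem_descendants.1 hA).2 h⟩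

theorem mem_descendants_of_mem_children (hC : C ∈ children 𝒜 E) : C ∈ descendants 𝒜 E :=
  (mem_filter.1 hC).1

theorem mem_of_mem_children (hC : C ∈ children 𝒜 E) : C ∈ 𝒜 :=
  (mem_descendants.1 (mem_descendants_of_mem_children hC)).1

theorem ssubset_of_mem_children (hC : C ∈ children 𝒜 E) : C ⊂ E :=
  (mem_descendants.1 (mem_descendants_of_mem_children hC)).2

theorem exists_mem_children_superset (hA : A ∈ descendants 𝒜 E) :
    ∃ C ∈ children 𝒜 E, A ⊆ C := by
  obtain ⟨C, hAC, hC⟩ := (descendants 𝒜 E).exists_le_maximal hA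
  exact ⟨C, mem_filter.2 ⟨hC.1, hC⟩, hAC⟩

theorem descendants_eq_biUnion :
    descendants 𝒜 E = (children 𝒜 E).biUnion fun C ↦ insert C (descendants 𝒜 C) := by
  ext A
  simp only [mem_biUnion, mem_insert]
  constructor
  · intro hA
    obtain ⟨C, hC, hAC⟩ := exists_mem_children_superset hA
    refine ⟨C, hC, (eq_or_ne A C).imp id fun hne ↦ ?_⟩
    exact mem_descendants.2 ⟨(mem_descendants.1 hA).1, ssubset_of_subset_of_ne hAC hne⟩
  · rintro ⟨C, hC, rfl | hA⟩
    · exact mem_descendants_of_mem_children hC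
    · exact descendants_mono (ssubset_of_mem_children hC).subset hA

theorem biUnion_children_subset : (children 𝒜 E).biUnion id ⊆ E :=
  biUnion_subset.2 fun _ hC ↦ (ssubset_of_mem_children hC).subset

theorem depth_add_one_le (hC : C ∈ descendants 𝒜 E) {i : α} (hi : i ∈ C) :
    depth 𝒜 C i + 1 ≤ depth 𝒜 E i := by
  have hCC : C ∉ (descendants 𝒜 C).filter (i ∈ ·) := fun h ↦
    (mem_descendants.1 (mem_filter.1 h).1).2.ne rfl
  rw [depth, depth, ← card_insert_of_notMem hCC]
  refine card_le_card (insert_subset (mem_filter.2 ⟨hC, hi⟩) ?_)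
  exact filter_subset_filter _ (descendants_mono (mem_descendants.1 hC).2.subset)

end Laminar

open Laminar

namespace IsLaminar

variable {𝒜 : Finset (Finset α)} {E : Finset α}

theorem pairwiseDisjoint_children (h𝒜 : IsLaminar 𝒜) :
    (children 𝒜 E : Set (Finset α)).PairwiseDisjoint id := by
  intro C hC D hD hCD
  have hC' := mem_filter.1 hC
  have hD' := mem_filter.1 hD
  rcases h𝒜 C (mem_of_mem_children hC) D (mem_of_mem_children hD) with h | h | h
  · exact absurd (le_antisymm h (hC'.2.2 hD'.1 h)) hCD
  · exact absurd (le_antisymm (hD'.2.2 hC'.1 h) h) hCD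
  · exact h

theorem card_eq_card_uncovered_add_sum (h𝒜 : IsLaminar 𝒜) :
    #E = #(uncovered 𝒜 E) + ∑ C ∈ children 𝒜 E, #C := by
  rw [uncovered, ← card_sdiff_add_card_eq_card biUnion_children_subset,
    card_biUnion h𝒜.pairwiseDisjoint_children]
  rfl

theorem two_le_degree (h𝒜 : IsLaminar 𝒜) (hE : 2 ≤ #E) : 2 ≤ degree 𝒜 E := by
  have hcard := h𝒜.card_eq_card_uncovered_add_sum (E := E)
  rw [degree]
  by_contra! hlt
  obtain hr | hr : #(children 𝒜 E) = 0 ∨ #(children 𝒜 E) = 1 := by omega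
  · rw [card_eq_zero.1 hr, sum_empty] at hcard
    omega
  · obtain ⟨C, hC⟩ := card_eq_one.1 hr
    have hCE := card_lt_card (ssubset_of_mem_children (hC ▸ mem_singleton_self C))
    rw [hC, sum_singleton] at hcard
    omega

theorem three_le_degree (h𝒜 : IsLaminar 𝒜) (hE : 3 ≤ #E)
    (hsmall : ∀ A ∈ 𝒜, 2 * #A < #E) : 3 ≤ degree 𝒜 E := by
  have hcard := h𝒜.card_eq_card_uncovered_add_sum (E := E)
  have hsum : 2 * ∑ C ∈ children 𝒜 E, #C ≤ #(children 𝒜 E) * (#E - 1) := by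
    rw [mul_sum]
    refine sum_le_card_nsmul _ _ _ fun C hC ↦ ?_
    have := hsmall C (mem_of_mem_children hC)
    omega
  rw [degree]
  by_contra! hlt
  obtain hr | hr | hr : #(children 𝒜 E) = 0 ∨ #(children 𝒜 E) = 1 ∨ #(children 𝒜 E) = 2 := by
    omega
  all_goals rw [hr] at hsum; omega

theorem sum_descendants (h𝒜 : IsLaminar 𝒜) (hne : ∀ A ∈ 𝒜, A.Nonempty) (f : Finset α → ℕ) :
    ∑ A ∈ descendants 𝒜 E, f A =
      ∑ C ∈ children 𝒜 E, (f C + ∑ A ∈ descendants 𝒜 C, f A) := by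
  have hsub : ∀ C ∈ children 𝒜 E, ∀ A ∈ insert C (descendants 𝒜 C), A ∈ 𝒜 ∧ A ⊆ C := by
    intro C hC A hA
    rcases mem_insert.1 hA with rfl | hA
    · exact ⟨mem_of_mem_children hC, subset_rfl⟩
    · exact ⟨(mem_descendants.1 hA).1, (mem_descendants.1 hA).2.subset⟩
  rw [descendants_eq_biUnion, sum_biUnion]
  · exact sum_congr rfl fun C _ ↦ sum_insert fun hC ↦ (mem_descendants.1 hC).2.ne rfl
  · intro C hC D hD hCD
    refine disjoint_left.2 fun A hAC hAD ↦ ?_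
    obtain ⟨i, hi⟩ := hne A (hsub C hC A hAC).1
    exact disjoint_left.1 (h𝒜.pairwiseDisjoint_children hC hD hCD) ((hsub C hC A hAC).2 hi)
      ((hsub D hD A hAD).2 hi)

/-- Every descendant of `E` and every point of `E` has exactly one parent. -/
theorem sum_degree_descendants_add_degree (h𝒜 : IsLaminar 𝒜) (hne : ∀ A ∈ 𝒜, A.Nonempty)
    (E : Finset α) :
    ∑ A ∈ descendants 𝒜 E, degree 𝒜 A + degree 𝒜 E = #E + #(descendants 𝒜 E) := by
  induction E using Finset.strongInduction with
  | H E ih =>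
  have hcard := h𝒜.card_eq_card_uncovered_add_sum (E := E)
  have hcount := h𝒜.sum_descendants hne (E := E) (fun _ ↦ 1)
  simp only [← card_eq_sum_ones, sum_add_distrib] at hcount
  have hchildren : ∀ C ∈ children 𝒜 E, degree 𝒜 C + ∑ A ∈ descendants 𝒜 C, degree 𝒜 A =
      #C + #(descendants 𝒜 C) := fun C hC ↦ by
    rw [add_comm]
    exact ih C (ssubset_of_mem_children hC)
  rw [h𝒜.sum_descendants hne, sum_congr rfl hchildren, sum_add_distrib, degree]
  omega

theorem two_mul_card_descendants_le_sum_degree (h𝒜 : IsLaminar 𝒜) (h2 : ∀ A ∈ 𝒜, 2 ≤ #A) :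
    2 * #(descendants 𝒜 E) ≤ ∑ A ∈ descendants 𝒜 E, degree 𝒜 A := by
  rw [mul_comm, ← smul_eq_mul]
  exact card_nsmul_le_sum _ _ _ fun A hA ↦ h𝒜.two_le_degree (h2 A (mem_descendants.1 hA).1)

theorem card_descendants_add_degree_le (h𝒜 : IsLaminar 𝒜) (h2 : ∀ A ∈ 𝒜, 2 ≤ #A) :
    #(descendants 𝒜 E) + degree 𝒜 E ≤ #E := by
  have := h𝒜.sum_degree_descendants_add_degree (fun A hA ↦ card_pos.1 (by linarith [h2 A hA])) E
  have := h𝒜.two_mul_card_descendants_le_sum_degree (E := E) h2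
  omega

theorem degree_le_two_of_card_le (h𝒜 : IsLaminar 𝒜) (h2 : ∀ A ∈ 𝒜, 2 ≤ #A)
    (hE : #E ≤ #(descendants 𝒜 E) + degree 𝒜 E) : ∀ A ∈ descendants 𝒜 E, degree 𝒜 A ≤ 2 := by
  have := h𝒜.sum_degree_descendants_add_degree (fun A hA ↦ card_pos.1 (by linarith [h2 A hA])) E
  have := h𝒜.two_mul_card_descendants_le_sum_degree (E := E) h2
  have hsum : ∑ _A ∈ descendants 𝒜 E, 2 = ∑ A ∈ descendants 𝒜 E, degree 𝒜 A := by
    rw [sum_const, smul_eq_mul]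
    omega
  intro A hA
  exact ((sum_eq_sum_iff_of_le fun A hA ↦
    h𝒜.two_le_degree (h2 A (mem_descendants.1 hA).1)).1 hsum A hA).ge

theorem sum_tsub_two_mul_depth_le (h𝒜 : IsLaminar 𝒜) (E : Finset α)
    (hbin : ∀ A ∈ descendants 𝒜 E, degree 𝒜 A ≤ 2) (c : ℕ) :
    ∑ i ∈ E, (c - 2 * depth 𝒜 E i) ≤ degree 𝒜 E * layerBound c := by
  induction E using Finset.strongInduction generalizing c with
  | H E ih =>
  have hchild : ∀ C ∈ children 𝒜 E,
      ∑ i ∈ id C, (c - 2 * depth 𝒜 E i) ≤ 2 * layerBound (c - 2) := by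
    intro C hC
    have hCE := mem_descendants_of_mem_children hC
    have hsub := ssubset_of_mem_children hC
    calc ∑ i ∈ C, (c - 2 * depth 𝒜 E i) ≤ ∑ i ∈ C, (c - 2 - 2 * depth 𝒜 C i) :=
          sum_le_sum fun i hi ↦ by have := depth_add_one_le hCE hi; omega
      _ ≤ degree 𝒜 C * layerBound (c - 2) :=
          ih C hsub (fun A hA ↦ hbin A (descendants_mono hsub.subset hA)) (c - 2)
      _ ≤ 2 * layerBound (c - 2) := Nat.mul_le_mul_right _ (hbin C hCE)
  rw [← sum_sdiff biUnion_children_subset, sum_biUnion h𝒜.pairwiseDisjoint_children]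
  calc _ ≤ #(uncovered 𝒜 E) • c + #(children 𝒜 E) • (2 * layerBound (c - 2)) :=
        add_le_add (sum_le_card_nsmul _ _ _ fun i _ ↦ Nat.sub_le _ _)
          (sum_le_card_nsmul _ _ _ hchild)
    _ ≤ degree 𝒜 E * layerBound c := by
        rw [smul_eq_mul, smul_eq_mul, degree, add_mul]
        exact add_le_add (Nat.mul_le_mul_left _ (le_layerBound c))
          (Nat.mul_le_mul_left _ (two_mul_layerBound_sub_two_le c))

end IsLaminar

end LaminarFamily

open Laminar

section Polygon

variable {n : ℕ}

theorem val_sub_pos_of_ne {a b : ZMod n} (h : a ≠ b) : 0 < (b - a).val :=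
  Nat.pos_of_ne_zero fun h0 ↦ h (sub_eq_zero.1 ((ZMod.val_eq_zero _).1 h0)).symm

theorem crosses_of_val_sub {a b c d : ZMod n} (hb : 0 < (b - a).val) (hc : 0 < (c - a).val)
    (hd : 0 < (d - a).val) (hbc : (b - a).val ≠ (c - a).val) (hbd : (b - a).val ≠ (d - a).val)
    (hcd : (c - a).val ≠ (d - a).val)
    (hx : (c - a).val < (b - a).val ↔ (b - a).val < (d - a).val) : Crosses s(a, b) s(c, d) := by
  have hne : ∀ {u w : ZMod n}, (u - a).val ≠ (w - a).val → u ≠ w := fun h huw ↦ h (huw ▸ rfl)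
  have hne_a : ∀ {u : ZMod n}, 0 < (u - a).val → a ≠ u := fun h hau ↦ by simp [← hau] at h
  refine ⟨a, b, c, d, rfl, rfl, hne_a hb, hne_a hc, hne_a hd, hne hbc, hne hbd, hne hcd, ?_⟩
  refine xor_iff_iff_not.2 ?_
  simp only [InArc]
  omega

variable [NeZero n]

theorem val_sub_add_val_sub_of_ne {a b : ZMod n} (h : a ≠ b) : (b - a).val + (a - b).val = n := by
  rw [← neg_sub b a, ZMod.neg_val, if_neg (sub_ne_zero.2 h.symm)]
  have := ZMod.val_lt (b - a)
  omega

theorem ne_of_two_mul_val_sub_eq {a b : ZMod n} (h : 2 * (b - a).val = n) : a ≠ b := by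
  rintro rfl
  simp only [sub_self, ZMod.val_zero, mul_zero] at h
  exact NeZero.ne n h.symm

theorem eq_of_val_sub_eq {a u w : ZMod n} (h : (u - a).val = (w - a).val) : u = w :=
  sub_left_injective (ZMod.val_injective n h)

theorem val_sub_add_val_sub_eq (a c i : ZMod n) :
    (c - a).val + (i - c).val = (i - a).val ∨ (c - a).val + (i - c).val = (i - a).val + n := by
  have h := ZMod.val_add (c - a) (i - c)
  rw [sub_add_sub_cancel'] at h
  have := ZMod.val_lt (c - a)
  have := ZMod.val_lt (i - c)
  rcases lt_or_ge ((c - a).val + (i - c).val) n with hlt | hge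
  · rw [Nat.mod_eq_of_lt hlt] at h
    exact Or.inl h.symm
  · rw [Nat.mod_eq_sub_mod hge, Nat.mod_eq_of_lt (by omega)] at h
    exact Or.inr (by omega)

/-- The `ℓ` boundary edges clockwise from `a`, the edge `{i, i + 1}` being indexed by `i`. -/
def cycInterval (a : ZMod n) (ℓ : ℕ) : Finset (ZMod n) := univ.filter fun i ↦ (i - a).val < ℓ

theorem mem_cycInterval {a i : ZMod n} {ℓ : ℕ} : i ∈ cycInterval a ℓ ↔ (i - a).val < ℓ := by
  simp [cycInterval]

theorem card_cycInterval (a : ZMod n) {ℓ : ℕ} (hℓ : ℓ ≤ n) : #(cycInterval a ℓ) = ℓ := by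
  have hcast : ∀ t < n, ((a + (t : ZMod n)) - a).val = t := fun t ht ↦ by
    rw [add_sub_cancel_left, ZMod.val_natCast_of_lt ht]
  have himage : cycInterval a ℓ = (range ℓ).image fun t : ℕ ↦ a + (t : ZMod n) := by
    ext i
    simp only [mem_cycInterval, mem_image, mem_range]
    refine ⟨fun hi ↦ ⟨(i - a).val, hi, by rw [ZMod.natCast_zmod_val, add_sub_cancel]⟩, ?_⟩
    rintro ⟨t, ht, rfl⟩
    rwa [hcast t (by omega)]
  rw [himage, card_image_of_injOn, card_range]
  intro s hs t ht hst
  rw [coe_range, Set.mem_Iio] at hs ht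
  rw [← hcast s (by omega), ← hcast t (by omega)]
  exact congrArg (fun x : ZMod n ↦ (x - a).val) hst

theorem eq_of_cycInterval_eq {a c : ZMod n} {ℓ : ℕ} (hℓ : 0 < ℓ) (h2ℓ : 2 * ℓ ≤ n)
    (h : cycInterval a ℓ = cycInterval c ℓ) : a = c := by
  by_contra hac
  have hc : c ∈ cycInterval a ℓ := h ▸ mem_cycInterval.2 (by simpa using hℓ)
  have ha : a ∈ cycInterval c ℓ := h ▸ mem_cycInterval.2 (by simpa using hℓ)
  rw [mem_cycInterval] at ha hc
  have := val_sub_add_val_sub_of_ne hac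
  omega

theorem cycInterval_laminar_of_not_crosses {a b c d : ZMod n} (hab : a ≠ b) (hcd : c ≠ d)
    (hℓ : 2 * (b - a).val ≤ n) (hm : 2 * (d - c).val ≤ n) (hcr : ¬Crosses s(a, b) s(c, d)) :
    cycInterval a (b - a).val ⊆ cycInterval c (d - c).val ∨
      cycInterval c (d - c).val ⊆ cycInterval a (b - a).val ∨
      Disjoint (cycInterval a (b - a).val) (cycInterval c (d - c).val) := by
  by_contra! hnot
  obtain ⟨h₁, h₂, h₃⟩ := hnot
  obtain ⟨i₁, hi₁, hi₁'⟩ := not_subset.1 h₁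
  obtain ⟨i₂, hi₂, hi₂'⟩ := not_subset.1 h₂
  obtain ⟨i₃, hi₃, hi₃'⟩ := not_disjoint_iff.1 h₃
  simp only [mem_cycInterval] at hi₁ hi₁' hi₂ hi₂' hi₃ hi₃'
  -- In clockwise positions seen from `a`, the witnesses `i₁`, `i₂`, `i₃` force exactly one of
  -- `c`, `d` strictly inside the arc from `a` to `b`.
  have := val_sub_pos_of_ne hab
  have := val_sub_pos_of_ne hcd
  have := val_sub_add_val_sub_eq a c d
  have := val_sub_add_val_sub_eq a c i₁
  have := val_sub_add_val_sub_eq a c i₂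
  have := val_sub_add_val_sub_eq a c i₃
  have := ZMod.val_lt (c - a)
  have := ZMod.val_lt (d - a)
  have := ZMod.val_lt (i₁ - c)
  have := ZMod.val_lt (i₂ - c)
  have := ZMod.val_lt (i₃ - c)
  exact hcr (crosses_of_val_sub (by omega) (by omega) (by omega) (by omega) (by omega) (by omega)
    (by omega))

theorem eq_of_isDiameter_of_not_crosses {a b c d : ZMod n} (hab : 2 * (b - a).val = n)
    (hcd : 2 * (d - c).val = n) (hcr : ¬Crosses s(a, b) s(c, d)) : s(a, b) = s(c, d) := by
  have := val_sub_add_val_sub_eq a c d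
  have := ZMod.val_lt (c - a)
  have := ZMod.val_lt (d - a)
  have haa : (a - a).val = 0 := by simp
  by_cases hx₀ : (c - a).val = 0
  · rw [eq_of_val_sub_eq (a := a) (u := a) (w := c) (by omega),
      eq_of_val_sub_eq (a := a) (u := b) (w := d) (by omega)]
  by_cases hxℓ : (c - a).val = (b - a).val
  · rw [eq_of_val_sub_eq (a := a) (u := a) (w := d) (by omega),
      eq_of_val_sub_eq (a := a) (u := b) (w := c) (by omega), Sym2.eq_swap]
  exact absurd (crosses_of_val_sub (by omega) (by omega) (by omega) (Ne.symm hxℓ) (by omega)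
    (by omega) (by omega)) hcr

end Polygon

section Chords

variable {n : ℕ}

theorem chordLen_mk (a b : ZMod n) : chordLen s(a, b) = min (b - a).val (a - b).val := rfl

variable [NeZero n]

noncomputable def shortArc (q : Sym2 (ZMod n)) : Finset (ZMod n) := univ.filter (LayersEdge q)

theorem mem_shortArc {q : Sym2 (ZMod n)} {i : ZMod n} : i ∈ shortArc q ↔ LayersEdge q i := by
  simp [shortArc]

theorem two_mul_chordLen_le (q : Sym2 (ZMod n)) : 2 * chordLen q ≤ n := by
  induction q using Sym2.inductionOn with
  | hf a b =>
  rcases eq_or_ne a b with rfl | hab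
  · simp [chordLen_mk]
  · have := val_sub_add_val_sub_of_ne hab
    rw [chordLen_mk]
    omega

theorem isDiameter_mk {a b : ZMod n} (h : 2 * (b - a).val = n) : IsDiameter s(a, b) := by
  have := val_sub_add_val_sub_of_ne (ne_of_two_mul_val_sub_eq h)
  show 2 * min (b - a).val (a - b).val = n
  omega

theorem exists_mk_of_isDiameter {q : Sym2 (ZMod n)} (hd : IsDiameter q) :
    ∃ a b, q = s(a, b) ∧ 2 * (b - a).val = n := by
  induction q using Sym2.inductionOn with
  | hf a b =>
  have hd' : 2 * min (b - a).val (a - b).val = n := hd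
  have hab : a ≠ b := by
    rintro rfl
    simp only [sub_self, ZMod.val_zero, min_self, mul_zero] at hd'
    exact NeZero.ne n hd'.symm
  have := val_sub_add_val_sub_of_ne hab
  exact ⟨a, b, rfl, by omega⟩

theorem ne_and_two_mul_val_sub_lt {a b : ZMod n} (h : (b - a).val < (a - b).val) :
    a ≠ b ∧ 2 * (b - a).val < n := by
  have hab : a ≠ b := by rintro rfl; simp at h
  have := val_sub_add_val_sub_of_ne hab
  exact ⟨hab, by omega⟩

theorem exists_mk_of_not_isDiameter {q : Sym2 (ZMod n)} (h0 : chordLen q ≠ 0)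
    (hd : ¬IsDiameter q) : ∃ a b, q = s(a, b) ∧ (b - a).val < (a - b).val := by
  induction q using Sym2.inductionOn with
  | hf a b =>
  have hab : a ≠ b := by rintro rfl; simp [chordLen_mk] at h0
  have := val_sub_add_val_sub_of_ne hab
  have hd' : 2 * min (b - a).val (a - b).val ≠ n := hd
  rcases lt_or_gt_of_ne (show (b - a).val ≠ (a - b).val by omega) with h | h
  · exact ⟨a, b, rfl, h⟩
  · exact ⟨b, a, Sym2.eq_swap, h⟩

theorem shortArc_mk {a b : ZMod n} (h : (b - a).val < (a - b).val) :
    shortArc s(a, b) = cycInterval a (b - a).val := by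
  ext i
  rw [mem_shortArc, mem_cycInterval]
  constructor
  · rintro ⟨a', b', he, hlt, hi⟩
    rcases Sym2.eq_iff.1 he with ⟨rfl, rfl⟩ | ⟨rfl, rfl⟩
    · exact hi
    · omega
  · exact fun hi ↦ ⟨a, b, rfl, h, hi⟩

theorem card_shortArc {q : Sym2 (ZMod n)} (h0 : chordLen q ≠ 0) (hd : ¬IsDiameter q) :
    #(shortArc q) = chordLen q := by
  obtain ⟨a, b, rfl, h⟩ := exists_mk_of_not_isDiameter h0 hd
  have := (ne_and_two_mul_val_sub_lt h).2
  rw [shortArc_mk h, card_cycInterval a (by omega), chordLen_mk, min_eq_left h.le]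

theorem eq_of_shortArc_eq {p q : Sym2 (ZMod n)} (hp0 : chordLen p ≠ 0) (hpd : ¬IsDiameter p)
    (hq0 : chordLen q ≠ 0) (hqd : ¬IsDiameter q) (h : shortArc p = shortArc q) : p = q := by
  have hcard := card_shortArc hp0 hpd
  rw [h, card_shortArc hq0 hqd] at hcard
  obtain ⟨a, b, rfl, hab⟩ := exists_mk_of_not_isDiameter hp0 hpd
  obtain ⟨c, d, rfl, hcd⟩ := exists_mk_of_not_isDiameter hq0 hqd
  rw [chordLen_mk, chordLen_mk, min_eq_left hab.le, min_eq_left hcd.le] at hcard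
  rw [shortArc_mk hab, shortArc_mk hcd, hcard] at h
  have hℓ := ne_and_two_mul_val_sub_lt hab
  obtain rfl := eq_of_cycInterval_eq (val_sub_pos_of_ne hℓ.1) hℓ.2.le h
  rw [eq_of_val_sub_eq hcard.symm]

theorem shortArc_laminar_of_not_crosses {p q : Sym2 (ZMod n)} (hp0 : chordLen p ≠ 0)
    (hpd : ¬IsDiameter p) (hq0 : chordLen q ≠ 0) (hqd : ¬IsDiameter q) (hcr : ¬Crosses p q) :
    shortArc p ⊆ shortArc q ∨ shortArc q ⊆ shortArc p ∨ Disjoint (shortArc p) (shortArc q) := by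
  obtain ⟨a, b, rfl, hab⟩ := exists_mk_of_not_isDiameter hp0 hpd
  obtain ⟨c, d, rfl, hcd⟩ := exists_mk_of_not_isDiameter hq0 hqd
  have hℓ := ne_and_two_mul_val_sub_lt hab
  have hm := ne_and_two_mul_val_sub_lt hcd
  rw [shortArc_mk hab, shortArc_mk hcd]
  exact cycInterval_laminar_of_not_crosses hℓ.1 hm.1 hℓ.2.le hm.2.le hcr

end Chords

section Triangulation

variable {n : ℕ} {T : Finset (Sym2 (ZMod n))}

theorem IsTriangulation.chordLen_ne_zero (hT : IsTriangulation n T) {q : Sym2 (ZMod n)}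
    (hq : q ∈ T) : chordLen q ≠ 0 := by
  have := hT.2.1 q hq
  omega

variable [NeZero n]

noncomputable def arcFamily (T : Finset (Sym2 (ZMod n))) : Finset (Finset (ZMod n)) :=
  (T.filter (¬IsDiameter ·)).image shortArc

theorem mem_arcFamily {A : Finset (ZMod n)} :
    A ∈ arcFamily T ↔ ∃ q ∈ T, ¬IsDiameter q ∧ shortArc q = A := by
  simp [arcFamily, and_assoc]

theorem two_mul_depth_add_le_mT (E : Finset (ZMod n)) (i : ZMod n) :
    2 * depth (arcFamily T) E i + #(T.filter IsDiameter) ≤ mT n T i := by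
  have hdepth : depth (arcFamily T) E i ≤ #(T.filter fun p ↦ LayersEdge p i ∧ ¬IsDiameter p) :=
    calc depth (arcFamily T) E i ≤ #((arcFamily T).filter (i ∈ ·)) :=
          card_le_card (filter_subset_filter _ (filter_subset _ _))
      _ ≤ #((T.filter (¬IsDiameter ·)).filter (i ∈ shortArc ·)) := by
          rw [arcFamily, filter_image]
          exact card_image_le
      _ = #(T.filter fun p ↦ LayersEdge p i ∧ ¬IsDiameter p) := by
          simp only [filter_filter, mem_shortArc, and_comm]
  rw [mT]
  gcongr

namespace IsTriangulation

theorem sum_mT (hT : IsTriangulation n T) : ∑ i, mT n T i = 2 * TCL n T := by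
  have hlayer : ∀ p ∈ T, #(univ.filter fun i ↦ LayersEdge p i ∧ ¬IsDiameter p) +
      (if IsDiameter p then chordLen p else 0) = chordLen p := by
    intro p hp
    by_cases hd : IsDiameter p
    · simp [hd]
    · simpa [hd, shortArc] using card_shortArc (hT.chordLen_ne_zero hp) hd
  have hdiam : n * #(T.filter IsDiameter) =
      2 * ∑ p ∈ T, if IsDiameter p then chordLen p else 0 := by
    rw [← sum_filter, card_eq_sum_ones, mul_sum, mul_sum]
    exact sum_congr rfl fun p hp ↦ by rw [mul_one]; exact (mem_filter.1 hp).2.symm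
  have hcount := sum_card_bipartiteAbove_eq_sum_card_bipartiteBelow (s := univ) (t := T)
    (r := fun i p ↦ LayersEdge p i ∧ ¬IsDiameter p)
  simp only [bipartiteAbove, bipartiteBelow] at hcount
  simp only [mT, sum_add_distrib, ← mul_sum, sum_const, card_univ, ZMod.card, smul_eq_mul]
  rw [hcount, hdiam, ← mul_add, ← sum_add_distrib, sum_congr rfl hlayer, TCL]

theorem card_arcFamily_add_card_diameters (hT : IsTriangulation n T) :
    #(arcFamily T) + #(T.filter IsDiameter) = n - 3 := by
  rw [← hT.1, ← card_filter_add_card_filter_not (s := T) (p := IsDiameter), add_comm]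
  congr 1
  exact card_image_of_injOn fun _ hp _ hq ↦
    eq_of_shortArc_eq (hT.chordLen_ne_zero (mem_filter.1 hp).1) (mem_filter.1 hp).2
      (hT.chordLen_ne_zero (mem_filter.1 hq).1) (mem_filter.1 hq).2

theorem two_le_card_of_mem_arcFamily (hT : IsTriangulation n T) {A : Finset (ZMod n)}
    (hA : A ∈ arcFamily T) : 2 ≤ #A := by
  obtain ⟨q, hq, hqd, rfl⟩ := mem_arcFamily.1 hA
  rw [card_shortArc (hT.chordLen_ne_zero hq) hqd]
  exact hT.2.1 q hq

theorem two_mul_card_lt_of_mem_arcFamily (hT : IsTriangulation n T) {A : Finset (ZMod n)}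
    (hA : A ∈ arcFamily T) : 2 * #A < n := by
  obtain ⟨q, hq, hqd, rfl⟩ := mem_arcFamily.1 hA
  rw [card_shortArc (hT.chordLen_ne_zero hq) hqd]
  exact lt_of_le_of_ne (two_mul_chordLen_le q) hqd

theorem isLaminar_arcFamily (hT : IsTriangulation n T) : IsLaminar (arcFamily T) := by
  intro A hA B hB
  obtain ⟨p, hp, hpd, rfl⟩ := mem_arcFamily.1 hA
  obtain ⟨q, hq, hqd, rfl⟩ := mem_arcFamily.1 hB
  rcases eq_or_ne p q with rfl | hpq
  · exact Or.inl subset_rfl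
  · exact shortArc_laminar_of_not_crosses (hT.chordLen_ne_zero hp) hpd (hT.chordLen_ne_zero hq)
      hqd (hT.2.2 p hp q hq hpq)

theorem card_diameters_le_one (hT : IsTriangulation n T) : #(T.filter IsDiameter) ≤ 1 := by
  refine card_le_one.2 fun p hp q hq ↦ ?_
  obtain ⟨hpT, hpd⟩ := mem_filter.1 hp
  obtain ⟨hqT, hqd⟩ := mem_filter.1 hq
  by_contra hpq
  obtain ⟨a, b, rfl, hab⟩ := exists_mk_of_isDiameter hpd
  obtain ⟨c, d, rfl, hcd⟩ := exists_mk_of_isDiameter hqd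
  exact hpq (eq_of_isDiameter_of_not_crosses hab hcd (hT.2.2 _ hpT _ hqT hpq))

theorem ssubset_or_ssubset_compl_of_isDiameter (hT : IsTriangulation n T) {a b : ZMod n}
    (hmem : s(a, b) ∈ T) (hdiam : 2 * (b - a).val = n) {A : Finset (ZMod n)}
    (hA : A ∈ arcFamily T) :
    A ⊂ cycInterval a (b - a).val ∨ A ⊂ (cycInterval a (b - a).val)ᶜ := by
  have hlt := hT.two_mul_card_lt_of_mem_arcFamily hA
  obtain ⟨q, hq, hqd, rfl⟩ := mem_arcFamily.1 hA
  have hqab : s(a, b) ≠ q := fun h ↦ hqd (h ▸ isDiameter_mk hdiam)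
  obtain ⟨c, d, rfl, hcd⟩ := exists_mk_of_not_isDiameter (hT.chordLen_ne_zero hq) hqd
  have hm := ne_and_two_mul_val_sub_lt hcd
  have hS := card_cycInterval a (ℓ := (b - a).val) (by omega)
  have hSc := card_compl (cycInterval a (b - a).val)
  rw [ZMod.card, hS] at hSc
  have hne : ∀ {X Y : Finset (ZMod n)}, #X < #Y → X ≠ Y := fun h e ↦ by rw [e] at h; omega
  rw [shortArc_mk hcd] at hlt ⊢
  rcases cycInterval_laminar_of_not_crosses (ne_of_two_mul_val_sub_eq hdiam) hm.1 hdiam.le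
    hm.2.le (hT.2.2 _ hmem _ hq hqab) with h | h | h
  · have := card_le_card h
    omega
  · exact Or.inl (ssubset_of_subset_of_ne h (hne (by omega)))
  · exact Or.inr (ssubset_of_subset_of_ne (subset_compl_iff_disjoint_right.2 h.symm)
      (hne (by omega)))

theorem sum_tsub_mT_le_of_no_diameter (hT : IsTriangulation n T) (hn : 3 ≤ n)
    (hD : T.filter IsDiameter = ∅) (k : ℕ) :
    ∑ i, (2 * k + 4 - mT n T i) ≤ 3 * 2 ^ (k + 2) := by
  have h𝒜 := hT.isLaminar_arcFamily
  have h2 := fun A ↦ hT.two_le_card_of_mem_arcFamily (A := A)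
  have hsmall : ∀ A ∈ arcFamily T, 2 * #A < #(univ : Finset (ZMod n)) := by
    simpa using fun A ↦ hT.two_mul_card_lt_of_mem_arcFamily (A := A)
  have hdesc : arcFamily T ⊆ descendants (arcFamily T) univ := fun A hA ↦
    mem_descendants.2 ⟨hA, ssubset_univ_iff.2 fun h ↦ by have := hsmall A hA; rw [h] at this; omega⟩
  have hcard := hT.card_arcFamily_add_card_diameters
  rw [hD, card_empty] at hcard
  have := card_le_card hdesc
  have hdeg := h𝒜.three_le_degree (by simpa using hn) hsmall
  have hle := h𝒜.card_descendants_add_degree_le h2 (E := univ)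
  rw [card_univ, ZMod.card] at hle
  have hbin := h𝒜.degree_le_two_of_card_le h2 (E := univ) (by rw [card_univ, ZMod.card]; omega)
  calc ∑ i, (2 * k + 4 - mT n T i) ≤ ∑ i, (2 * k + 4 - 2 * depth (arcFamily T) univ i) :=
        sum_le_sum fun i _ ↦ by have := two_mul_depth_add_le_mT (T := T) univ i; omega
    _ ≤ degree (arcFamily T) univ * layerBound (2 * k + 4) :=
        h𝒜.sum_tsub_two_mul_depth_le univ hbin _
    _ ≤ 3 * 2 ^ (k + 2) := Nat.mul_le_mul (by omega) (layerBound_even_le (k + 1))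

theorem sum_tsub_mT_le_of_diameter (hT : IsTriangulation n T) {a b : ZMod n}
    (hmem : s(a, b) ∈ T) (hdiam : 2 * (b - a).val = n) (k : ℕ) :
    ∑ i, (2 * k + 4 - mT n T i) ≤ 3 * 2 ^ (k + 2) := by
  set 𝒜 := arcFamily T
  set S := cycInterval a (b - a).val
  have h𝒜 : IsLaminar 𝒜 := hT.isLaminar_arcFamily
  have h2 : ∀ A ∈ 𝒜, 2 ≤ #A := fun A ↦ hT.two_le_card_of_mem_arcFamily
  have hS : #S = (b - a).val := card_cycInterval a (by omega)
  have hSc : #Sᶜ = (b - a).val := by rw [card_compl, ZMod.card, hS]; omega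
  have hlen : 2 ≤ (b - a).val := by
    have : 2 * chordLen s(a, b) = n := isDiameter_mk hdiam
    have := hT.2.1 _ hmem
    omega
  have hD : #(T.filter IsDiameter) = 1 := le_antisymm hT.card_diameters_le_one
    (card_pos.2 ⟨_, mem_filter.2 ⟨hmem, isDiameter_mk hdiam⟩⟩)
  have hcard : #𝒜 + 1 = n - 3 := hD ▸ hT.card_arcFamily_add_card_diameters
  have hcover : #𝒜 ≤ #(descendants 𝒜 S) + #(descendants 𝒜 Sᶜ) := by
    refine (card_le_card fun A hA ↦ ?_).trans (card_union_le _ _)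
    rcases hT.ssubset_or_ssubset_compl_of_isDiameter hmem hdiam hA with h | h
    · exact mem_union_left _ (mem_descendants.2 ⟨hA, h⟩)
    · exact mem_union_right _ (mem_descendants.2 ⟨hA, h⟩)
  have := h𝒜.card_descendants_add_degree_le h2 (E := S)
  have := h𝒜.card_descendants_add_degree_le h2 (E := Sᶜ)
  have hdeg := h𝒜.two_le_degree (E := S) (by omega)
  have hdeg' := h𝒜.two_le_degree (E := Sᶜ) (by omega)
  have hbin := h𝒜.degree_le_two_of_card_le h2 (E := S) (by omega)
  have hbin' := h𝒜.degree_le_two_of_card_le h2 (E := Sᶜ) (by omega)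
  have hdepth : ∀ E i, 2 * k + 4 - mT n T i ≤ 2 * k + 3 - 2 * depth 𝒜 E i := fun E i ↦ by
    have : 2 * depth 𝒜 E i + 1 ≤ mT n T i := hD ▸ two_mul_depth_add_le_mT E i
    omega
  calc ∑ i, (2 * k + 4 - mT n T i)
        = ∑ i ∈ S, (2 * k + 4 - mT n T i) + ∑ i ∈ Sᶜ, (2 * k + 4 - mT n T i) :=
        (sum_add_sum_compl S _).symm
    _ ≤ ∑ i ∈ S, (2 * k + 3 - 2 * depth 𝒜 S i) + ∑ i ∈ Sᶜ, (2 * k + 3 - 2 * depth 𝒜 Sᶜ i) :=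
        add_le_add (sum_le_sum fun i _ ↦ hdepth S i) (sum_le_sum fun i _ ↦ hdepth Sᶜ i)
    _ ≤ degree 𝒜 S * layerBound (2 * k + 3) + degree 𝒜 Sᶜ * layerBound (2 * k + 3) :=
        add_le_add (h𝒜.sum_tsub_two_mul_depth_le S hbin _)
          (h𝒜.sum_tsub_two_mul_depth_le Sᶜ hbin' _)
    _ ≤ 2 * (3 * 2 ^ k) + 2 * (3 * 2 ^ k) := by
        gcongr <;> first | omega | exact layerBound_odd_le k
    _ = 3 * 2 ^ (k + 2) := by ring

theorem sum_tsub_mT_le (hT : IsTriangulation n T) (hn : 3 ≤ n) (k : ℕ) :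
    ∑ i, (2 * k + 4 - mT n T i) ≤ 3 * 2 ^ (k + 2) := by
  rcases (T.filter IsDiameter).eq_empty_or_nonempty with hD | ⟨d, hd⟩
  · exact hT.sum_tsub_mT_le_of_no_diameter hn hD k
  · obtain ⟨a, b, rfl, hdiam⟩ := exists_mk_of_isDiameter (mem_filter.1 hd).2
    exact hT.sum_tsub_mT_le_of_diameter (mem_filter.1 hd).1 hdiam k

end IsTriangulation

end Triangulation

theorem min_TCL_lower_bound_general (k n : ℕ)
    (T : Finset (Sym2 (ZMod n))) (hT : IsTriangulation n T) :
    n * (k + 2) - 3 * 2 ^ (k + 1) ≤ TCL n T := by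
  have hpow : k + 2 ≤ 2 ^ (k + 1) := Nat.lt_two_pow_self
  rcases lt_or_ge n 3 with hn | hn
  · have : n * (k + 2) ≤ 2 * (k + 2) := Nat.mul_le_mul_right _ (by omega)
    omega
  have : NeZero n := ⟨by omega⟩
  have hdeficit := hT.sum_tsub_mT_le hn k
  have hsum : ∑ _i : ZMod n, (2 * k + 4) ≤ ∑ i, mT n T i + ∑ i, (2 * k + 4 - mT n T i) := by
    rw [← sum_add_distrib]
    exact sum_le_sum fun i _ ↦ le_add_tsub
  rw [sum_const, card_univ, ZMod.card, smul_eq_mul, hT.sum_mT] at hsum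
  have : n * (2 * k + 4) = 2 * (n * (k + 2)) := by ring
  rw [pow_succ] at hdeficit
  omega

/-- For `k ≥ 0` and `3·2^k ≤ n ≤ 3·2^(k+1)`, every triangulation `T` of the
`n`-gon satisfies `TCL(T) ≥ n(k+2) - 3·2^(k+1)`. -/
theorem min_TCL_lower_bound (k n : ℕ) (h1 : 3 * 2 ^ k ≤ n) (h2 : n ≤ 3 * 2 ^ (k + 1))
    (T : Finset (Sym2 (ZMod n))) (hT : IsTriangulation n T) :
    n * (k + 2) - 3 * 2 ^ (k + 1) ≤ TCL n T :=
  min_TCL_lower_bound_general k n T hT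
end

section
/- Let k ≥ 0 be an integer and let n be an integer with 3·2^k ≤ n ≤ 3·2^{k+1}. Then there exists a triangulation T of the n-gon with TCL(T) = n(k+2) − 3·2^{k+1}. -/
open scoped Classical

/-!
Split the boundary of the `n`-gon into three arcs whose lengths `L₁, L₂, L₃` lie in
`[2^k, 2^(k+1)]` (for instance `⌊n/3⌋, ⌊(n+1)/3⌋, ⌊(n+2)/3⌋`), take the triangle on their
endpoints, and triangulate each arc by recursive bisection: the chord spanning an arc of length
`L` together with the bisections of its two halves, of lengths `⌊L/2⌋` and `⌈L/2⌉`. Halving maps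
`[2^(j+1), 2^(j+2)]` into `[2^j, 2^(j+1)]`, so by induction on `k` the chords of an arc of length
`L ∈ [2^k, 2^(k+1)]` have total length `L(k+2) - 2^(k+1)`; the three arcs add up to
`n(k+2) - 3·2^(k+1)`.

The chords are produced as integer intervals `[a, b] ⊆ [0, n]` and read modulo `n`; intervals
that are nested or have disjoint interiors give non-crossing chords.
-/

open Finset

namespace ZMod

theorem val_natCast_of_le {n d : ℕ} (hd : d ≤ n) :
    (d : ZMod n).val = d ∨ d = n ∧ (d : ZMod n).val = 0 := by
  obtain rfl | hd := hd.eq_or_lt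
  · simp
  · exact .inl (val_natCast_of_lt hd)

theorem natCast_eq_natCast_of_le {n a b : ℕ} (ha : a ≤ n) (hb : b ≤ n)
    (h : (a : ZMod n) = b) : a = b ∨ a = 0 ∧ b = n ∨ a = n ∧ b = 0 := by
  have := congrArg val h
  have := val_natCast_of_le ha
  have := val_natCast_of_le hb
  omega

theorem val_natCast_sub_natCast {n a b : ℕ} (hab : a ≤ b) (h : b - a < n) :
    ((b : ZMod n) - a).val = b - a := by
  rw [← Nat.cast_sub hab, val_natCast_of_lt h]

theorem val_sub_add_val {n : ℕ} [NeZero n] (x y : ZMod n) :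
    (x - y).val + y.val = x.val ∨ (x - y).val + y.val = x.val + n := by
  rcases lt_or_ge ((x - y).val + y.val) n with h | h
  · left; rw [← val_add_of_lt h, sub_add_cancel]
  · right; rw [val_add_val_of_le h, sub_add_cancel]

end ZMod

theorem inArc_swap_iff {n : ℕ} [NeZero n] {a b x : ZMod n} (hab : a ≠ b) (hxa : x ≠ a)
    (hxb : x ≠ b) : InArc b a x ↔ ¬ InArc a b x := by
  have hu : (x - a).val ≠ 0 := by rwa [ne_eq, ZMod.val_eq_zero, sub_eq_zero]
  have hv : (x - b).val ≠ 0 := by rwa [ne_eq, ZMod.val_eq_zero, sub_eq_zero]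
  have hw : b - a ≠ 0 := sub_ne_zero.2 hab.symm
  have hvu := ZMod.val_sub_add_val (x - a) (b - a)
  rw [sub_sub_sub_cancel_right] at hvu
  have := ZMod.val_lt (x - a)
  have := ZMod.val_lt (x - b)
  have := ZMod.val_lt (b - a)
  unfold InArc
  rw [← neg_sub b a, ZMod.neg_val, if_neg hw]
  omega

theorem xor_inArc_swap_iff {n : ℕ} [NeZero n] {a b c d : ZMod n} (hab : a ≠ b) (hac : a ≠ c)
    (had : a ≠ d) (hbc : b ≠ c) (hbd : b ≠ d) :
    Xor (InArc b a c) (InArc b a d) ↔ Xor (InArc a b c) (InArc a b d) := by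
  rw [inArc_swap_iff hab hac.symm hbc.symm, inArc_swap_iff hab had.symm hbd.symm, xor_not_not]

theorem crosses_mk_iff {n : ℕ} [NeZero n] {a b c d : ZMod n} :
    Crosses s(a, b) s(c, d) ↔ a ≠ b ∧ a ≠ c ∧ a ≠ d ∧ b ≠ c ∧ b ≠ d ∧ c ≠ d ∧
      Xor (InArc a b c) (InArc a b d) := by
  constructor
  · rintro ⟨a', b', c', d', hp, hq, hab, hac, had, hbc, hbd, hcd, hx⟩
    rcases Sym2.eq_iff.1 hp with ⟨rfl, rfl⟩ | ⟨rfl, rfl⟩ <;>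
      rcases Sym2.eq_iff.1 hq with ⟨rfl, rfl⟩ | ⟨rfl, rfl⟩
    · exact ⟨hab, hac, had, hbc, hbd, hcd, hx⟩
    · exact ⟨hab, had, hac, hbd, hbc, hcd.symm, xor_comm .. ▸ hx⟩
    · exact ⟨hab.symm, hbc, hbd, hac, had, hcd,
        (xor_inArc_swap_iff hab.symm hbc hbd hac had).1 hx⟩
    · exact ⟨hab.symm, hbd, hbc, had, hac, hcd.symm,
        (xor_inArc_swap_iff hab.symm hbd hbc had hac).1 (xor_comm .. ▸ hx)⟩
  · rintro ⟨hab, hac, had, hbc, hbd, hcd, hx⟩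
    exact ⟨a, b, c, d, rfl, rfl, hab, hac, had, hbc, hbd, hcd, hx⟩

def NestedOrDisjoint (x y : ℕ × ℕ) : Prop :=
  x.2 ≤ y.1 ∨ y.2 ≤ x.1 ∨ (x.1 ≤ y.1 ∧ y.2 ≤ x.2) ∨ (y.1 ≤ x.1 ∧ x.2 ≤ y.2)

def natChord (n : ℕ) (x : ℕ × ℕ) : Sym2 (ZMod n) := s((x.1 : ZMod n), (x.2 : ZMod n))

theorem chordLen_natChord {n : ℕ} {x : ℕ × ℕ} (hx : x.1 < x.2) (hlen : 2 * (x.2 - x.1) ≤ n) :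
    chordLen (natChord n x) = x.2 - x.1 := by
  have : NeZero n := ⟨by omega⟩
  have hv : ((x.2 : ZMod n) - x.1).val = x.2 - x.1 :=
    ZMod.val_natCast_sub_natCast hx.le (by omega)
  have hne : (x.2 : ZMod n) - x.1 ≠ 0 := by
    intro h
    rw [h, ZMod.val_zero] at hv
    omega
  change min ((x.2 : ZMod n) - x.1).val ((x.1 : ZMod n) - x.2).val = _
  rw [← neg_sub (x.2 : ZMod n), ZMod.neg_val, if_neg hne, hv]
  omega

theorem eq_or_wrap_of_natChord_eq {n : ℕ} {x y : ℕ × ℕ} (hx : x.1 < x.2) (hxn : x.2 ≤ n)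
    (hy : y.1 < y.2) (hyn : y.2 ≤ n) (h : natChord n x = natChord n y) :
    x = y ∨ x.1 = 0 ∧ y.2 = n ∧ x.2 = y.1 ∨ y.1 = 0 ∧ x.2 = n ∧ x.1 = y.2 := by
  rw [Prod.ext_iff]
  rcases Sym2.eq_iff.1 h with ⟨h₁, h₂⟩ | ⟨h₁, h₂⟩
  · have := ZMod.natCast_eq_natCast_of_le (by omega) (by omega) h₁
    have := ZMod.natCast_eq_natCast_of_le hxn hyn h₂
    omega
  · have := ZMod.natCast_eq_natCast_of_le (by omega) hyn h₁
    have := ZMod.natCast_eq_natCast_of_le hxn (by omega) h₂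
    omega

theorem inArc_natCast_iff {n a b d : ℕ} (hab : a < b) (hbn : b ≤ n) (hba : b - a < n)
    (hd : d ≤ n) : InArc (a : ZMod n) (b : ZMod n) (d : ZMod n) ↔ a < d ∧ d < b := by
  have : NeZero n := ⟨by omega⟩
  have hv := ZMod.val_sub_add_val (d : ZMod n) a
  rw [ZMod.val_natCast_of_lt (by omega : a < n)] at hv
  have := ZMod.val_natCast_of_le hd
  have := ZMod.val_lt ((d : ZMod n) - (a : ZMod n))
  unfold InArc
  rw [ZMod.val_natCast_sub_natCast hab.le hba]
  omega

theorem not_crosses_natChord {n : ℕ} {x y : ℕ × ℕ} (hx : x.1 < x.2) (hxn : x.2 ≤ n)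
    (hlen : x.2 - x.1 < n) (hy : y.1 < y.2) (hyn : y.2 ≤ n) (hxy : NestedOrDisjoint x y) :
    ¬ Crosses (natChord n x) (natChord n y) := by
  have : NeZero n := ⟨by omega⟩
  rw [natChord, natChord, crosses_mk_iff, inArc_natCast_iff hx hxn hlen (by omega),
    inArc_natCast_iff hx hxn hlen hyn]
  rintro ⟨-, h₁, -, -, h₂, -, hxor⟩
  have : x.1 ≠ y.1 := fun h ↦ h₁ (congrArg _ h)
  have : x.2 ≠ y.2 := fun h ↦ h₂ (congrArg _ h)
  unfold NestedOrDisjoint at hxy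
  unfold Xor at hxor
  omega

theorem isTriangulation_image_natChord {n : ℕ} {F : Finset (ℕ × ℕ)}
    (hF : ∀ x ∈ F, x.1 + 2 ≤ x.2 ∧ x.2 ≤ n ∧ 2 * (x.2 - x.1) ≤ n)
    (hnest : ∀ x ∈ F, ∀ y ∈ F, NestedOrDisjoint x y)
    (hinj : Set.InjOn (natChord n) F) (hcard : #F = n - 3) :
    IsTriangulation n (F.image (natChord n)) := by
  refine ⟨by rwa [card_image_of_injOn hinj], ?_, ?_⟩
  · simp only [forall_mem_image]
    intro x hx
    obtain ⟨h₁, -, h₂⟩ := hF x hx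
    rw [chordLen_natChord (by omega) h₂]
    omega
  · simp only [forall_mem_image]
    intro x hx y hy _
    obtain ⟨h₁, h₂, h₃⟩ := hF x hx
    obtain ⟨h₄, h₅, -⟩ := hF y hy
    exact not_crosses_natChord (by omega) h₂ (by omega) (by omega) h₅ (hnest x hx y hy)

theorem TCL_image_natChord {n : ℕ} {F : Finset (ℕ × ℕ)}
    (hF : ∀ x ∈ F, x.1 < x.2 ∧ 2 * (x.2 - x.1) ≤ n) (hinj : Set.InjOn (natChord n) F) :
    TCL n (F.image (natChord n)) = ∑ x ∈ F, (x.2 - x.1) := by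
  rw [TCL, sum_image hinj]
  exact sum_congr rfl fun x hx ↦ chordLen_natChord (hF x hx).1 (hF x hx).2

def bisectIntervals (a L : ℕ) : Finset (ℕ × ℕ) :=
  if L < 2 then ∅ else
    insert (a, a + L) (bisectIntervals a (L / 2) ∪ bisectIntervals (a + L / 2) (L - L / 2))
termination_by L
decreasing_by all_goals omega

theorem bisectIntervals_of_lt_two {a L : ℕ} (h : L < 2) : bisectIntervals a L = ∅ := by
  rw [bisectIntervals, if_pos h]

theorem bisectIntervals_of_two_le {a L : ℕ} (h : 2 ≤ L) :
    bisectIntervals a L =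
      insert (a, a + L) (bisectIntervals a (L / 2) ∪ bisectIntervals (a + L / 2) (L - L / 2)) := by
  rw [bisectIntervals, if_neg (by omega)]

theorem bounds_of_mem_bisectIntervals {a L : ℕ} {x : ℕ × ℕ} (hx : x ∈ bisectIntervals a L) :
    a ≤ x.1 ∧ x.1 + 2 ≤ x.2 ∧ x.2 ≤ a + L := by
  induction a, L using bisectIntervals.induct with
  | case1 a L h => simp [bisectIntervals_of_lt_two h] at hx
  | case2 a L h ih₁ ih₂ =>
    rw [bisectIntervals_of_two_le (by omega), mem_insert, mem_union] at hx
    rcases hx with rfl | hx | hx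
    · omega
    · have := ih₁ hx; omega
    · have := ih₂ hx; omega

theorem disjoint_bisectIntervals {a L b M : ℕ} (h : a + L ≤ b) :
    Disjoint (bisectIntervals a L) (bisectIntervals b M) :=
  disjoint_left.2 fun _ hx hy ↦ by
    have := bounds_of_mem_bisectIntervals hx
    have := bounds_of_mem_bisectIntervals hy
    omega

theorem outer_notMem_bisectIntervals_halves (a L : ℕ) :
    (a, a + L) ∉ bisectIntervals a (L / 2) ∪ bisectIntervals (a + L / 2) (L - L / 2) := by
  rw [mem_union, not_or]
  constructor <;> intro hx <;> have := bounds_of_mem_bisectIntervals hx <;> omega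

theorem card_bisectIntervals (a L : ℕ) : #(bisectIntervals a L) = L - 1 := by
  induction a, L using bisectIntervals.induct with
  | case1 a L h => rw [bisectIntervals_of_lt_two h, card_empty]; omega
  | case2 a L h ih₁ ih₂ =>
    rw [bisectIntervals_of_two_le (by omega), card_insert_of_notMem
      (outer_notMem_bisectIntervals_halves a L), card_union_of_disjoint
      (disjoint_bisectIntervals le_rfl), ih₁, ih₂]
    omega

theorem nestedOrDisjoint_of_mem_bisectIntervals {a L : ℕ} {x y : ℕ × ℕ}
    (hx : x ∈ bisectIntervals a L) (hy : y ∈ bisectIntervals a L) : NestedOrDisjoint x y := by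
  induction a, L using bisectIntervals.induct with
  | case1 a L h => simp [bisectIntervals_of_lt_two h] at hx
  | case2 a L h ih₁ ih₂ =>
    have hx₀ := bounds_of_mem_bisectIntervals hx
    have hy₀ := bounds_of_mem_bisectIntervals hy
    rw [bisectIntervals_of_two_le (by omega), mem_insert, mem_union] at hx hy
    rcases hx with rfl | hx | hx <;> rcases hy with rfl | hy | hy
    all_goals first
      | exact ih₁ hx hy
      | exact ih₂ hx hy
      | (unfold NestedOrDisjoint; omega)
      | (have := bounds_of_mem_bisectIntervals hx; have := bounds_of_mem_bisectIntervals hy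
         unfold NestedOrDisjoint; omega)

theorem sum_bisectIntervals (k : ℕ) {a L : ℕ} (h₁ : 2 ^ k ≤ L) (h₂ : L ≤ 2 ^ (k + 1)) :
    ∑ x ∈ bisectIntervals a L, (x.2 - x.1) + 2 ^ (k + 1) = L * (k + 2) := by
  induction k generalizing a L with
  | zero =>
    obtain rfl | rfl : L = 1 ∨ L = 2 := by omega
    · simp [bisectIntervals_of_lt_two]
    · simp [bisectIntervals_of_two_le, bisectIntervals_of_lt_two]
  | succ k ih =>
    have hpow : 2 ^ (k + 1 + 1) = 2 * 2 ^ (k + 1) := pow_succ' 2 (k + 1)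
    have hpow' : 2 ^ (k + 1) = 2 * 2 ^ k := pow_succ' 2 k
    have hk : 1 ≤ 2 ^ k := Nat.one_le_two_pow
    have hleft := ih (a := a) (L := L / 2) (by omega) (by omega)
    have hright := ih (a := a + L / 2) (L := L - L / 2) (by omega) (by omega)
    have hsplit : L / 2 * (k + 2) + (L - L / 2) * (k + 2) = L * (k + 2) := by
      rw [← add_mul, Nat.add_sub_cancel' (Nat.div_le_self L 2)]
    rw [bisectIntervals_of_two_le (by omega), sum_insert (outer_notMem_bisectIntervals_halves a L),
      sum_union (disjoint_bisectIntervals le_rfl), Nat.add_sub_cancel_left]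
    linarith

def triangleIntervals (L₁ L₂ L₃ : ℕ) : Finset (ℕ × ℕ) :=
  bisectIntervals 0 L₁ ∪ bisectIntervals L₁ L₂ ∪ bisectIntervals (L₁ + L₂) L₃

section triangleIntervals

variable {L₁ L₂ L₃ : ℕ}

theorem bounds_of_mem_triangleIntervals {x : ℕ × ℕ} (hx : x ∈ triangleIntervals L₁ L₂ L₃) :
    x.1 + 2 ≤ x.2 ∧
      (x.2 ≤ L₁ ∨ L₁ ≤ x.1 ∧ x.2 ≤ L₁ + L₂ ∨ L₁ + L₂ ≤ x.1 ∧ x.2 ≤ L₁ + L₂ + L₃) := by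
  rw [triangleIntervals, mem_union, mem_union] at hx
  rcases hx with (hx | hx) | hx <;> have := bounds_of_mem_bisectIntervals hx <;> omega

theorem nestedOrDisjoint_of_mem_triangleIntervals {x y : ℕ × ℕ}
    (hx : x ∈ triangleIntervals L₁ L₂ L₃) (hy : y ∈ triangleIntervals L₁ L₂ L₃) :
    NestedOrDisjoint x y := by
  rw [triangleIntervals, mem_union, mem_union] at hx hy
  rcases hx with (hx | hx) | hx <;> rcases hy with (hy | hy) | hy
  all_goals first
    | exact nestedOrDisjoint_of_mem_bisectIntervals hx hy
    | (have := bounds_of_mem_bisectIntervals hx; have := bounds_of_mem_bisectIntervals hy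
       unfold NestedOrDisjoint; omega)

theorem card_triangleIntervals (h₁ : 0 < L₁) (h₂ : 0 < L₂) (h₃ : 0 < L₃) :
    #(triangleIntervals L₁ L₂ L₃) = L₁ + L₂ + L₃ - 3 := by
  rw [triangleIntervals, card_union_of_disjoint, card_union_of_disjoint (disjoint_bisectIntervals
    (by omega)), card_bisectIntervals, card_bisectIntervals, card_bisectIntervals]
  · omega
  · exact disjoint_union_left.2
      ⟨disjoint_bisectIntervals (by omega), disjoint_bisectIntervals le_rfl⟩

theorem sum_triangleIntervals (f : ℕ × ℕ → ℕ) :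
    ∑ x ∈ triangleIntervals L₁ L₂ L₃, f x = ∑ x ∈ bisectIntervals 0 L₁, f x +
      ∑ x ∈ bisectIntervals L₁ L₂, f x + ∑ x ∈ bisectIntervals (L₁ + L₂) L₃, f x := by
  rw [triangleIntervals, sum_union, sum_union (disjoint_bisectIntervals (by omega))]
  exact disjoint_union_left.2
    ⟨disjoint_bisectIntervals (by omega), disjoint_bisectIntervals le_rfl⟩

theorem injOn_natChord_triangleIntervals {n : ℕ} (hn : L₁ + L₂ + L₃ = n) (h₁ : 0 < L₁)
    (h₂ : 0 < L₂) (h₃ : 0 < L₃) :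
    Set.InjOn (natChord n) (triangleIntervals L₁ L₂ L₃) := by
  intro x hx y hy hxy
  have hx' := bounds_of_mem_triangleIntervals hx
  have hy' := bounds_of_mem_triangleIntervals hy
  rcases eq_or_wrap_of_natChord_eq (n := n) (by omega) (by omega) (by omega) (by omega) hxy
    with h | h | h
  · exact h
  all_goals omega

theorem isTriangulation_and_TCL_triangleIntervals {n : ℕ} (hn : L₁ + L₂ + L₃ = n) (h₁ : 0 < L₁)
    (h₂ : 0 < L₂) (h₃ : 0 < L₃) (t₁ : L₁ ≤ L₂ + L₃) (t₂ : L₂ ≤ L₁ + L₃) (t₃ : L₃ ≤ L₁ + L₂) :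
    IsTriangulation n ((triangleIntervals L₁ L₂ L₃).image (natChord n)) ∧
      TCL n ((triangleIntervals L₁ L₂ L₃).image (natChord n)) =
        ∑ x ∈ triangleIntervals L₁ L₂ L₃, (x.2 - x.1) := by
  have hF (x) (hx : x ∈ triangleIntervals L₁ L₂ L₃) :
      x.1 + 2 ≤ x.2 ∧ x.2 ≤ n ∧ 2 * (x.2 - x.1) ≤ n := by
    have := bounds_of_mem_triangleIntervals hx
    omega
  have hinj := injOn_natChord_triangleIntervals hn h₁ h₂ h₃
  exact ⟨isTriangulation_image_natChord hF (fun _ hx _ hy ↦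
      nestedOrDisjoint_of_mem_triangleIntervals hx hy) hinj
      (hn ▸ card_triangleIntervals h₁ h₂ h₃),
    TCL_image_natChord (fun x hx ↦ ⟨by linarith [hF x hx], (hF x hx).2.2⟩) hinj⟩

end triangleIntervals

/-- For `k ≥ 0` and `3·2^k ≤ n ≤ 3·2^(k+1)`, there exists a triangulation `T`
of the `n`-gon with `TCL(T) = n(k+2) - 3·2^(k+1)`. -/
theorem min_TCL_attained (k n : ℕ) (h1 : 3 * 2 ^ k ≤ n) (h2 : n ≤ 3 * 2 ^ (k + 1)) :
    ∃ T : Finset (Sym2 (ZMod n)), IsTriangulation n T ∧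
      TCL n T = n * (k + 2) - 3 * 2 ^ (k + 1) := by
  have hpow : 2 ^ (k + 1) = 2 * 2 ^ k := pow_succ' 2 k
  have hk : 1 ≤ 2 ^ k := Nat.one_le_two_pow
  obtain ⟨L₁, L₂, L₃, hn, h₁, h₂, h₃⟩ : ∃ L₁ L₂ L₃, L₁ + L₂ + L₃ = n ∧
      (2 ^ k ≤ L₁ ∧ L₁ ≤ 2 ^ (k + 1)) ∧ (2 ^ k ≤ L₂ ∧ L₂ ≤ 2 ^ (k + 1)) ∧
        (2 ^ k ≤ L₃ ∧ L₃ ≤ 2 ^ (k + 1)) :=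
    ⟨n / 3, (n + 1) / 3, (n + 2) / 3, by omega, by omega, by omega, by omega⟩
  obtain ⟨hT, hTCL⟩ := isTriangulation_and_TCL_triangleIntervals hn
    (by omega) (by omega) (by omega) (by omega) (by omega) (by omega)
  refine ⟨_, hT, ?_⟩
  have e₁ := sum_bisectIntervals k (a := 0) h₁.1 h₁.2
  have e₂ := sum_bisectIntervals k (a := L₁) h₂.1 h₂.2
  have e₃ := sum_bisectIntervals k (a := L₁ + L₂) h₃.1 h₃.2
  have hdist : n * (k + 2) = L₁ * (k + 2) + L₂ * (k + 2) + L₃ * (k + 2) := by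
    rw [← hn]; ring
  rw [hTCL, sum_triangleIntervals]
  omega
end

section
/- Let n ≥ 5. The set S_n = { {0, j} : j = 2, 3, …, n−2 } (the shell, or fan, graph) is a triangulation of the n-gon, and TCL(S_n) = (n² − 9)/4 if n is odd and TCL(S_n) = (n² − 8)/4 if n is even. -/
open scoped Classical

/-- The shell (fan) graph `S_n = { {0, j} : j = 2, …, n - 2 }`. -/
def shell (n : ℕ) : Finset (Sym2 (ZMod n)) :=
  (Finset.Icc 2 (n - 2)).image (fun j : ℕ => s((0 : ZMod n), (j : ZMod n)))

lemma gauss_aux (h : ℕ) (hh : 1 ≤ h) :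
    2 * (∑ j ∈ Finset.Ioc 1 h, j) + 4 = h^2 + h + 2 := by
  induction h with
  | zero => omega
  | succ k ih =>
    rcases Nat.lt_or_ge k 1 with hk|hk
    · interval_cases k <;> simp [Finset.sum_Ioc_succ_top]
    · rw [Finset.sum_Ioc_succ_top (by omega)]
      have h1 : (k+1)^2 = k^2 + 2*k + 1 := by ring
      have := ih hk
      omega

lemma reflect_aux (n m : ℕ) (h1 : n ≤ 2*m+2) (h2 : m+2 ≤ n) :
    ∑ j ∈ Finset.Ioc m (n-2), min j (n-j) = ∑ k ∈ Finset.Ioc 1 (n-m-1), k := by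
  refine Finset.sum_nbij' (i := fun j => n - j) (j := fun k => n - k)
    ?_ ?_ ?_ ?_ ?_
  · intro a ha; simp only [Finset.mem_Ioc] at *; omega
  · intro a ha; simp only [Finset.mem_Ioc] at *; omega
  · intro a ha; simp only [Finset.mem_Ioc] at *; omega
  · intro a ha; simp only [Finset.mem_Ioc] at *; omega
  · intro a ha; simp only [Finset.mem_Ioc] at ha
    exact min_eq_right (by omega)

lemma sum_odd_aux (g : ℕ) :
    4 * ∑ j ∈ Finset.Ioc 1 (2*(g+2)+1-2), min j (2*(g+2)+1-j) = (2*(g+2)+1)^2 - 9 := by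
  set h := g + 2 with hh
  rw [← Finset.sum_Ioc_consecutive _ (show 1 ≤ h by omega) (show h ≤ 2*h+1-2 by omega)]
  rw [Finset.sum_congr rfl (fun j hj => by
    simp only [Finset.mem_Ioc] at hj; exact min_eq_left (by omega))]
  rw [reflect_aux (2*h+1) h (by omega) (by omega)]
  have e1 : 2*h+1-h-1 = h := by omega
  rw [e1]
  have g1 := gauss_aux h (by omega)
  have r1 : (2*h+1)^2 = 4*(h*h) + 4*h + 1 := by ring
  have r2 : h^2 = h*h := by ring
  omega

lemma sum_even_aux (g : ℕ) :
    4 * ∑ j ∈ Finset.Ioc 1 (2*(g+3)-2), min j (2*(g+3)-j) = (2*(g+3))^2 - 8 := by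
  set h := g + 3 with hh
  rw [← Finset.sum_Ioc_consecutive _ (show 1 ≤ h by omega) (show h ≤ 2*h-2 by omega)]
  rw [Finset.sum_congr rfl (fun j hj => by
    simp only [Finset.mem_Ioc] at hj; exact min_eq_left (by omega))]
  rw [reflect_aux (2*h) h (by omega) (by omega)]
  have e1 : 2*h-h-1 = g+2 := by omega
  rw [e1]
  have g1 := gauss_aux h (by omega)
  have g2 := gauss_aux (g+2) (by omega)
  have r1 : (2*h)^2 = 4*(g*g) + 24*g + 36 := by rw [hh]; ring
  have r2 : h^2 = g*g + 6*g + 9 := by rw [hh]; ring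
  have r3 : (g+2)^2 = g*g + 4*g + 4 := by ring
  omega

/-- For `n ≥ 5`, the shell graph `S_n` is a triangulation of the `n`-gon, and
`4·TCL(S_n) = n² - 9` if `n` is odd, `4·TCL(S_n) = n² - 8` if `n` is even. -/
theorem shell_isTriangulation_and_TCL (n : ℕ) (hn : 5 ≤ n) :
    IsTriangulation n (shell n) ∧
    (Odd n → 4 * TCL n (shell n) = n ^ 2 - 9) ∧
    (Even n → 4 * TCL n (shell n) = n ^ 2 - 8) := by
  haveI : NeZero n := ⟨by omega⟩
  have hval : ∀ j ∈ Finset.Icc 2 (n-2), ((j : ZMod n)).val = j := by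
    intro j hj
    simp only [Finset.mem_Icc] at hj
    exact ZMod.val_natCast_of_lt (by omega)
  have hlen : ∀ j ∈ Finset.Icc 2 (n-2),
      chordLen (s((0 : ZMod n), (j : ZMod n))) = min j (n - j) := by
    intro j hj
    have hj' := hj
    simp only [Finset.mem_Icc] at hj'
    have h0 : ((j : ZMod n)) ≠ 0 := by
      intro h
      have := hval j hj
      rw [h, ZMod.val_zero] at this; omega
    simp only [chordLen, cycDist, Sym2.lift_mk, sub_zero, zero_sub]
    rw [ZMod.neg_val, if_neg h0, hval j hj]
  have hinj : ∀ x ∈ Finset.Icc 2 (n-2), ∀ y ∈ Finset.Icc 2 (n-2),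
      s((0 : ZMod n), (x : ZMod n)) = s((0 : ZMod n), (y : ZMod n)) → x = y := by
    intro x hx y hy hxy
    rw [Sym2.eq_iff] at hxy
    rcases hxy with ⟨-, h⟩ | ⟨h0, h⟩
    · have := hval x hx
      rw [h, hval y hy] at this
      omega
    · exfalso
      have := hval y hy
      rw [← h0, ZMod.val_zero] at this
      simp only [Finset.mem_Icc] at hy; omega
  have hmem : ∀ p ∈ shell n, ∃ j ∈ Finset.Icc 2 (n-2),
      p = s((0 : ZMod n), (j : ZMod n)) := by
    intro p hp
    simp only [shell, Finset.mem_image] at hp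
    obtain ⟨j, hj, hpe⟩ := hp
    exact ⟨j, hj, hpe.symm⟩
  have hzero : ∀ p ∈ shell n, ∀ a b : ZMod n, p = s(a, b) → a = 0 ∨ b = 0 := by
    intro p hp a b hab
    obtain ⟨j, hj, rfl⟩ := hmem p hp
    rw [Sym2.eq_iff] at hab
    rcases hab with ⟨h1, -⟩ | ⟨h1, -⟩
    · exact Or.inl h1.symm
    · exact Or.inr h1.symm
  have hkey : TCL n (shell n) = ∑ j ∈ Finset.Ioc 1 (n-2), min j (n-j) := by
    rw [show Finset.Ioc 1 (n-2) = Finset.Icc 2 (n-2) from by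
      ext x; simp only [Finset.mem_Ioc, Finset.mem_Icc]; omega]
    rw [TCL, shell, Finset.sum_image hinj]
    exact Finset.sum_congr rfl hlen
  refine ⟨⟨?_, ?_, ?_⟩, ?_, ?_⟩
  · rw [shell, Finset.card_image_of_injOn (fun x hx y hy => hinj x hx y hy),
      Nat.card_Icc]
    omega
  · intro p hp
    obtain ⟨j, hj, rfl⟩ := hmem p hp
    rw [hlen j hj]
    simp only [Finset.mem_Icc] at hj
    omega
  · intro p hp q hq hpq hcr
    obtain ⟨a, b, c, d, hpe, hqe, hab, hac, had, hbc, hbd, hcd, -⟩ := hcr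
    rcases hzero p hp a b hpe with rfl | rfl <;>
      rcases hzero q hq c d hqe with rfl | rfl
    · exact hac rfl
    · exact had rfl
    · exact hbc rfl
    · exact hbd rfl
  · intro hodd
    rw [hkey]
    obtain ⟨r, hr⟩ := hodd
    obtain ⟨g, rfl⟩ : ∃ g, n = 2*(g+2)+1 := ⟨(n-5)/2, by omega⟩
    exact sum_odd_aux g
  · intro heven
    rw [hkey]
    obtain ⟨r, hr⟩ := heven
    obtain ⟨g, rfl⟩ : ∃ g, n = 2*(g+3) := ⟨(n-6)/2, by omega⟩
    exact sum_even_aux g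
end

section
/- Let n ≥ 5. Every triangulation of the n-gon contains at least two ears, i.e., at least two chords of length 2 (the two ears theorem). -/
open scoped Classical

set_option linter.unusedSectionVars false

namespace TwoEarsAux

variable {n : ℕ}

/-- smaller val of the endpoints -/
def lo (p : Sym2 (ZMod n)) : ℕ :=
  Sym2.lift ⟨fun a b => min a.val b.val, fun _ _ => min_comm _ _⟩ p

/-- larger val of the endpoints -/
def hi (p : Sym2 (ZMod n)) : ℕ :=
  Sym2.lift ⟨fun a b => max a.val b.val, fun _ _ => max_comm _ _⟩ p

lemma exists_repr (p : Sym2 (ZMod n)) :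
    ∃ a b : ZMod n, p = s(a, b) ∧ a.val ≤ b.val ∧ lo p = a.val ∧ hi p = b.val := by
  induction p using Sym2.ind with
  | _ x y =>
    rcases le_total x.val y.val with h | h
    · exact ⟨x, y, rfl, h, by simp [lo, min_eq_left h], by simp [hi, max_eq_right h]⟩
    · exact ⟨y, x, Sym2.eq_swap, h, by simp [lo, min_eq_right h], by simp [hi, max_eq_left h]⟩

lemma lo_le_hi (p : Sym2 (ZMod n)) : lo p ≤ hi p := by
  obtain ⟨a, b, rfl, hab, h1, h2⟩ := exists_repr p
  omega

lemma hi_lt [NeZero n] (p : Sym2 (ZMod n)) : hi p < n := by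
  obtain ⟨a, b, rfl, hab, h1, h2⟩ := exists_repr p
  rw [h2]; exact ZMod.val_lt b

lemma cast_val [NeZero n] (x : ZMod n) : ((x.val : ℕ) : ZMod n) = x := by
  rw [ZMod.natCast_val, ZMod.cast_id]

lemma val_inj [NeZero n] {x y : ZMod n} (h : x.val = y.val) : x = y :=
  ZMod.val_injective n h

lemma val_sub_of_le [NeZero n] {x y : ZMod n} (h : y.val ≤ x.val) :
    (x - y).val = x.val - y.val := by
  have e : ((x.val - y.val : ℕ) : ZMod n) = x - y := by
    rw [Nat.cast_sub h, cast_val, cast_val]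
  rw [← e, ZMod.val_cast_of_lt (by have := ZMod.val_lt x; omega)]

lemma val_sub_wrap [NeZero n] {x y : ZMod n} (h : x.val < y.val) :
    (x - y).val = n - (y.val - x.val) := by
  have hy := ZMod.val_lt y
  have e : ((n - (y.val - x.val) : ℕ) : ZMod n) = x - y := by
    rw [Nat.cast_sub (by omega : y.val - x.val ≤ n), Nat.cast_sub h.le, cast_val, cast_val,
      ZMod.natCast_self]
    ring
  rw [← e, ZMod.val_cast_of_lt (by omega)]

lemma chordLen_eq [NeZero n] (p : Sym2 (ZMod n)) :
    chordLen p = min (hi p - lo p) (n - (hi p - lo p)) := by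
  obtain ⟨a, b, rfl, hab, hlo, hhi⟩ := exists_repr p
  rw [hlo, hhi]
  rcases eq_or_lt_of_le hab with h | h
  · have hb : a = b := val_inj h
    subst hb
    simp [chordLen, cycDist]
  · show cycDist a b = _
    rw [cycDist, val_sub_of_le h.le, val_sub_wrap h]

lemma crosses_of_vals [NeZero n] {a b c d : ZMod n}
    (h1 : a.val < c.val) (h2 : c.val < b.val) (h3 : b.val < d.val) :
    Crosses s(a, b) s(c, d) := by
  have hne : ∀ {x y : ZMod n}, x.val < y.val → x ≠ y :=
    fun hxy h => by subst h; omega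
  refine ⟨a, b, c, d, rfl, rfl, hne (by omega), hne h1, hne (by omega), (hne h2).symm,
    hne h3, hne (by omega), Or.inl ⟨⟨?_, ?_⟩, ?_⟩⟩
  · rw [val_sub_of_le h1.le]; omega
  · rw [val_sub_of_le h1.le, val_sub_of_le (by omega : a.val ≤ b.val)]; omega
  · rintro ⟨h4, h5⟩
    rw [val_sub_of_le (by omega : a.val ≤ d.val),
      val_sub_of_le (by omega : a.val ≤ b.val)] at h5
    omega


variable {T : Finset (Sym2 (ZMod n))}

/-- Chords of `T` whose endpoints lie in the interval `[i, j]` of positions. -/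
def Fset (T : Finset (Sym2 (ZMod n))) (i j : ℕ) : Finset (Sym2 (ZMod n)) :=
  T.filter fun p => i ≤ lo p ∧ hi p ≤ j

lemma mem_Fset {p : Sym2 (ZMod n)} {i j : ℕ} :
    p ∈ Fset T i j ↔ p ∈ T ∧ i ≤ lo p ∧ hi p ≤ j := by
  simp [Fset]

section Core

variable [NeZero n]

lemma split_subset
    (hnc : ∀ p ∈ T, ∀ q ∈ T, p ≠ q → ¬(lo p < lo q ∧ lo q < hi p ∧ hi p < hi q))
    (i c j : ℕ) (e p₂ : Sym2 (ZMod n)) (hp₂T : p₂ ∈ T)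
    (hp₂lo : lo p₂ = c) (hp₂hi : hi p₂ = j)
    (hmin : ∀ q ∈ Fset T i j, hi q = j → q ≠ e → c ≤ lo q) :
    Fset T i j ⊆ insert e (Fset T i c ∪ Fset T c j) := by
  intro q hq
  by_cases hqe : q = e
  · simp [hqe]
  rw [Finset.mem_insert]
  right
  obtain ⟨hqT, hqlo, hqhi⟩ := mem_Fset.mp hq
  by_cases hqj : hi q = j
  · exact Finset.mem_union_right _ (mem_Fset.mpr ⟨hqT, hmin q hq hqj hqe, hqhi⟩)
  · have hlt : hi q < j := lt_of_le_of_ne hqhi hqj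
    by_cases hcq : c ≤ lo q
    · exact Finset.mem_union_right _ (mem_Fset.mpr ⟨hqT, hcq, hqhi⟩)
    · have hqp₂ : q ≠ p₂ := fun h => hqj (by rw [h, hp₂hi])
      have hn := hnc q hqT p₂ hp₂T hqp₂
      refine Finset.mem_union_left _ (mem_Fset.mpr ⟨hqT, hqlo, ?_⟩)
      omega

lemma Fset_empty (hspan : ∀ p ∈ T, 2 ≤ hi p - lo p) {i j : ℕ} (h : j < i + 2) :
    Fset T i j = ∅ := by
  rw [Finset.eq_empty_iff_forall_notMem]
  intro p hp
  obtain ⟨hT, h1, h2⟩ := mem_Fset.mp hp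
  have := hspan p hT
  have := lo_le_hi p
  omega

lemma boundH
    (hspan : ∀ p ∈ T, 2 ≤ hi p - lo p)
    (hnc : ∀ p ∈ T, ∀ q ∈ T, p ≠ q → ¬(lo p < lo q ∧ lo q < hi p ∧ hi p < hi q))
    (hinj : ∀ p q : Sym2 (ZMod n), lo p = lo q → hi p = hi q → p = q) :
    ∀ L i j, j - i ≤ L → (Fset T i j).card ≤ j - i - 1 := by
  intro L
  induction L with
  | zero =>
    intro i j hL
    rw [Fset_empty hspan (by omega)]
    simp
  | succ L IH =>
    intro i j hL
    by_cases h2 : j < i + 2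
    · rw [Fset_empty hspan h2]; simp
    push_neg at h2
    by_cases hCne : ∃ p ∈ Fset T i j, hi p = j
    · obtain ⟨p₀, hp₀M, hp₀min⟩ :=
        Finset.exists_min_image ((Fset T i j).filter fun p => hi p = j) lo
          (by obtain ⟨p, hp1, hp2⟩ := hCne
              exact ⟨p, Finset.mem_filter.mpr ⟨hp1, hp2⟩⟩)
      obtain ⟨hp₀F, hp₀hi⟩ := Finset.mem_filter.mp hp₀M
      obtain ⟨hp₀T, hp₀lo, -⟩ := mem_Fset.mp hp₀F
      have hp₀span := hspan p₀ hp₀T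
      by_cases hC' : ∃ p ∈ Fset T i j, hi p = j ∧ p ≠ p₀
      · obtain ⟨p₂, hp₂M, hp₂min⟩ :=
          Finset.exists_min_image ((Fset T i j).filter fun p => hi p = j ∧ p ≠ p₀) lo
            (by obtain ⟨p, hp1, hp2, hp3⟩ := hC'
                exact ⟨p, Finset.mem_filter.mpr ⟨hp1, hp2, hp3⟩⟩)
        obtain ⟨hp₂F, hp₂hi, hp₂ne⟩ := Finset.mem_filter.mp hp₂M
        obtain ⟨hp₂T, hp₂lo, -⟩ := mem_Fset.mp hp₂F
        have hspan₂ := hspan p₂ hp₂T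
        have hcge : lo p₀ ≤ lo p₂ := hp₀min p₂ (Finset.mem_filter.mpr ⟨hp₂F, hp₂hi⟩)
        have hic : i < lo p₂ := by
          rcases eq_or_lt_of_le (le_trans hp₀lo hcge) with h | h
          · exact absurd (hinj p₂ p₀ (by omega) (by omega)) hp₂ne
          · exact h
        have hcj : lo p₂ + 2 ≤ j := by omega
        have hsub := split_subset hnc i (lo p₂) j p₀ p₂ hp₂T rfl hp₂hi
          (fun q hq hqj hqe => hp₂min q (Finset.mem_filter.mpr ⟨hq, hqj, hqe⟩))
        have hb1 := IH i (lo p₂) (by omega)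
        have hb2 := IH (lo p₂) j (by omega)
        have hc1 := Finset.card_le_card hsub
        have hc2 := Finset.card_insert_le p₀ (Fset T i (lo p₂) ∪ Fset T (lo p₂) j)
        have hc3 := Finset.card_union_le (Fset T i (lo p₂)) (Fset T (lo p₂) j)
        omega
      · push_neg at hC'
        have hsub : Fset T i j ⊆ insert p₀ (Fset T i (j - 1)) := by
          intro q hq
          rw [Finset.mem_insert]
          by_cases hqe : q = p₀
          · exact Or.inl hqe
          · obtain ⟨hqT, hqlo, hqhi⟩ := mem_Fset.mp hq
            have : hi q ≠ j := fun h => hqe (hC' q hq h)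
            exact Or.inr (mem_Fset.mpr ⟨hqT, hqlo, by omega⟩)
        have hb := IH i (j - 1) (by omega)
        have hc1 := Finset.card_le_card hsub
        have hc2 := Finset.card_insert_le p₀ (Fset T i (j - 1))
        omega
    · push_neg at hCne
      have hsub : Fset T i j ⊆ Fset T i (j - 1) := by
        intro q hq
        obtain ⟨hqT, hqlo, hqhi⟩ := mem_Fset.mp hq
        have := hCne q hq
        exact mem_Fset.mpr ⟨hqT, hqlo, by omega⟩
      have hb := IH i (j - 1) (by omega)
      have hc1 := Finset.card_le_card hsub
      omega

lemma closing
    (hspan : ∀ p ∈ T, 2 ≤ hi p - lo p)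
    (hnc : ∀ p ∈ T, ∀ q ∈ T, p ≠ q → ¬(lo p < lo q ∧ lo q < hi p ∧ hi p < hi q))
    (hinj : ∀ p q : Sym2 (ZMod n), lo p = lo q → hi p = hi q → p = q)
    (i j : ℕ) (h2 : i + 2 ≤ j) (hcard : j - i - 1 ≤ (Fset T i j).card) :
    ∃ p₀ ∈ T, lo p₀ = i ∧ hi p₀ = j := by
  by_cases hCne : ∃ p ∈ Fset T i j, hi p = j
  · obtain ⟨p₀, hp₀M, hp₀min⟩ :=
      Finset.exists_min_image ((Fset T i j).filter fun p => hi p = j) lo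
        (by obtain ⟨p, hp1, hp2⟩ := hCne
            exact ⟨p, Finset.mem_filter.mpr ⟨hp1, hp2⟩⟩)
    obtain ⟨hp₀F, hp₀hi⟩ := Finset.mem_filter.mp hp₀M
    obtain ⟨hp₀T, hp₀lo, -⟩ := mem_Fset.mp hp₀F
    have hp₀span := hspan p₀ hp₀T
    refine ⟨p₀, hp₀T, ?_, hp₀hi⟩
    by_contra hne
    have hic : i < lo p₀ := lt_of_le_of_ne hp₀lo (Ne.symm hne)
    have hsub := split_subset hnc i (lo p₀) j p₀ p₀ hp₀T rfl hp₀hi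
      (fun q hq hqj _ => hp₀min q (Finset.mem_filter.mpr ⟨hq, hqj⟩))
    have hp₀mem : p₀ ∈ Fset T (lo p₀) j := mem_Fset.mpr ⟨hp₀T, le_rfl, by omega⟩
    rw [Finset.insert_eq_self.mpr (Finset.mem_union_right _ hp₀mem)] at hsub
    have hb1 := boundH hspan hnc hinj (lo p₀ - i) i (lo p₀) le_rfl
    have hb2 := boundH hspan hnc hinj (j - lo p₀) (lo p₀) j le_rfl
    have hc1 := Finset.card_le_card hsub
    have hc3 := Finset.card_union_le (Fset T i (lo p₀)) (Fset T (lo p₀) j)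
    omega
  · push_neg at hCne
    have hsub : Fset T i j ⊆ Fset T i (j - 1) := by
      intro q hq
      obtain ⟨hqT, hqlo, hqhi⟩ := mem_Fset.mp hq
      have := hCne q hq
      exact mem_Fset.mpr ⟨hqT, hqlo, by omega⟩
    have hb := boundH hspan hnc hinj (j - 1 - i) i (j - 1) le_rfl
    have hc1 := Finset.card_le_card hsub
    omega

lemma earE
    (hspan : ∀ p ∈ T, 2 ≤ hi p - lo p)
    (hnc : ∀ p ∈ T, ∀ q ∈ T, p ≠ q → ¬(lo p < lo q ∧ lo q < hi p ∧ hi p < hi q))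
    (hinj : ∀ p q : Sym2 (ZMod n), lo p = lo q → hi p = hi q → p = q) :
    ∀ L i j, j - i ≤ L → i + 3 ≤ j → j - i - 1 ≤ (Fset T i j).card →
    ∃ p ∈ T, i ≤ lo p ∧ hi p ≤ j ∧ hi p = lo p + 2 := by
  intro L
  induction L with
  | zero => intro i j hL h3 _; exact absurd h3 (by omega)
  | succ L IH =>
    intro i j hL h3 hcard
    obtain ⟨p₀, hp₀T, hp₀lo, hp₀hi⟩ := closing hspan hnc hinj i j (by omega) hcard
    by_cases hC' : ∃ p ∈ Fset T i j, hi p = j ∧ p ≠ p₀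
    · obtain ⟨p₂, hp₂M, hp₂min⟩ :=
        Finset.exists_min_image ((Fset T i j).filter fun p => hi p = j ∧ p ≠ p₀) lo
          (by obtain ⟨p, hp1, hp2, hp3⟩ := hC'
              exact ⟨p, Finset.mem_filter.mpr ⟨hp1, hp2, hp3⟩⟩)
      obtain ⟨hp₂F, hp₂hi, hp₂ne⟩ := Finset.mem_filter.mp hp₂M
      obtain ⟨hp₂T, hp₂lo, -⟩ := mem_Fset.mp hp₂F
      have hspan₂ := hspan p₂ hp₂T
      have hic : i < lo p₂ := by
        rcases eq_or_lt_of_le hp₂lo with h | h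
        · exact absurd (hinj p₂ p₀ (by omega) (by omega)) hp₂ne
        · exact h
      have hcj : lo p₂ + 2 ≤ j := by omega
      have hsub := split_subset hnc i (lo p₂) j p₀ p₂ hp₂T rfl hp₂hi
        (fun q hq hqj hqe => hp₂min q (Finset.mem_filter.mpr ⟨hq, hqj, hqe⟩))
      have hb1 := boundH hspan hnc hinj (lo p₂ - i) i (lo p₂) le_rfl
      have hb2 := boundH hspan hnc hinj (j - lo p₂) (lo p₂) j le_rfl
      have hc1 := Finset.card_le_card hsub
      have hc2 := Finset.card_insert_le p₀ (Fset T i (lo p₂) ∪ Fset T (lo p₂) j)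
      have hc3 := Finset.card_union_le (Fset T i (lo p₂)) (Fset T (lo p₂) j)
      have hfull1 : lo p₂ - i - 1 ≤ (Fset T i (lo p₂)).card := by omega
      have hfull2 : j - lo p₂ - 1 ≤ (Fset T (lo p₂) j).card := by omega
      by_cases hbig1 : i + 3 ≤ lo p₂
      · obtain ⟨p, hpT, h1, h2', h3'⟩ := IH i (lo p₂) (by omega) hbig1 hfull1
        exact ⟨p, hpT, h1, by omega, h3'⟩
      · by_cases heq1 : lo p₂ = i + 2
        · obtain ⟨p, hpT, hplo, hphi⟩ := closing hspan hnc hinj i (lo p₂) (by omega) hfull1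
          exact ⟨p, hpT, by omega, by omega, by omega⟩
        · by_cases hbig2 : lo p₂ + 3 ≤ j
          · obtain ⟨p, hpT, h1, h2', h3'⟩ := IH (lo p₂) j (by omega) hbig2 hfull2
            exact ⟨p, hpT, by omega, h2', h3'⟩
          · obtain ⟨p, hpT, hplo, hphi⟩ := closing hspan hnc hinj (lo p₂) j (by omega) hfull2
            exact ⟨p, hpT, by omega, by omega, by omega⟩
    · push_neg at hC'
      have hsub : Fset T i j ⊆ insert p₀ (Fset T i (j - 1)) := by
        intro q hq
        rw [Finset.mem_insert]
        by_cases hqe : q = p₀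
        · exact Or.inl hqe
        · obtain ⟨hqT, hqlo, hqhi⟩ := mem_Fset.mp hq
          have : hi q ≠ j := fun h => hqe (hC' q hq h)
          exact Or.inr (mem_Fset.mpr ⟨hqT, hqlo, by omega⟩)
      have hc1 := Finset.card_le_card hsub
      have hc2 := Finset.card_insert_le p₀ (Fset T i (j - 1))
      have hfull : (j - 1) - i - 1 ≤ (Fset T i (j - 1)).card := by omega
      by_cases hbig : i + 3 ≤ j - 1
      · obtain ⟨p, hpT, h1, h2', h3'⟩ := IH i (j - 1) (by omega) hbig hfull
        exact ⟨p, hpT, h1, by omega, h3'⟩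
      · obtain ⟨p, hpT, hplo, hphi⟩ := closing hspan hnc hinj i (j - 1) (by omega) hfull
        exact ⟨p, hpT, by omega, by omega, by omega⟩

end Core


theorem main_two_ears (n : ℕ) (hn : 5 ≤ n) (T : Finset (Sym2 (ZMod n)))
    (hcard : T.card = n - 3) (hlen : ∀ p ∈ T, 2 ≤ chordLen p)
    (hcross : ∀ p ∈ T, ∀ q ∈ T, p ≠ q → ¬ Crosses p q) :
    2 ≤ (T.filter (fun p => chordLen p = 2)).card := by
  haveI : NeZero n := ⟨by omega⟩
  have hspan : ∀ p ∈ T, 2 ≤ hi p - lo p ∧ hi p - lo p ≤ n - 2 := by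
    intro p hp
    have h2 := hlen p hp
    rw [chordLen_eq] at h2
    have h3 := lo_le_hi p
    have h4 := hi_lt (n := n) p
    rw [le_min_iff] at h2
    omega
  have hspan' : ∀ p ∈ T, 2 ≤ hi p - lo p := fun p hp => (hspan p hp).1
  have hnc : ∀ p ∈ T, ∀ q ∈ T, p ≠ q → ¬(lo p < lo q ∧ lo q < hi p ∧ hi p < hi q) := by
    rintro p hp q hq hpq ⟨h1, h2, h3⟩
    obtain ⟨a, b, hpe, hab, hloa, hhib⟩ := exists_repr p
    obtain ⟨c, d, hqe, hcd, hloc, hhid⟩ := exists_repr q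
    refine hcross p hp q hq hpq ?_
    rw [hpe, hqe]
    exact crosses_of_vals (by omega) (by omega) (by omega)
  have hinj : ∀ p q : Sym2 (ZMod n), lo p = lo q → hi p = hi q → p = q := by
    intro p q h1 h2
    obtain ⟨a, b, hpe, hab, hloa, hhib⟩ := exists_repr p
    obtain ⟨c, d, hqe, hcd, hloc, hhid⟩ := exists_repr q
    rw [hpe, hqe]
    rw [val_inj (by omega : a.val = c.val), val_inj (by omega : b.val = d.val)]
  have ear_len : ∀ p ∈ T, hi p = lo p + 2 → chordLen p = 2 := by
    intro p hp h
    rw [chordLen_eq]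
    have h2 : hi p - lo p = 2 := by omega
    rw [h2, min_eq_left (by omega : 2 ≤ n - 2)]
  have wrap_len : ∀ p ∈ T, hi p - lo p = n - 2 → chordLen p = 2 := by
    intro p hp h
    rw [chordLen_eq, h]
    have h2 : n - (n - 2) = 2 := by omega
    rw [h2, min_eq_right (by omega : 2 ≤ n - 2)]
  have hmem2 : ∀ p ∈ T, chordLen p = 2 → p ∈ T.filter (fun p => chordLen p = 2) :=
    fun p hp h => Finset.mem_filter.mpr ⟨hp, h⟩
  by_cases hA : ∃ p ∈ T, hi p = n - 1
  · -- some chord ends at position n - 1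
    have hT0 : ∀ p ∈ T, p ∈ Fset T 0 (n - 1) := by
      intro p hp
      have := hi_lt (n := n) p
      exact mem_Fset.mpr ⟨hp, by omega, by omega⟩
    have hcard0 : n - 3 ≤ (Fset T 0 (n - 1)).card := by
      rw [← hcard]
      exact Finset.card_le_card hT0
    obtain ⟨p₀, hp₀M, hp₀min⟩ :=
      Finset.exists_min_image (T.filter fun p => hi p = n - 1) lo
        (by obtain ⟨p, hp1, hp2⟩ := hA
            exact ⟨p, Finset.mem_filter.mpr ⟨hp1, hp2⟩⟩)
    obtain ⟨hp₀T, hp₀hi⟩ := Finset.mem_filter.mp hp₀M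
    have hp₀span := hspan p₀ hp₀T
    have hc1 : 1 ≤ lo p₀ := by omega
    have hc2 : lo p₀ + 2 ≤ n - 1 := by omega
    have hsub := split_subset hnc 0 (lo p₀) (n - 1) p₀ p₀ hp₀T rfl hp₀hi
      (fun q hq hqj _ => hp₀min q (Finset.mem_filter.mpr ⟨(mem_Fset.mp hq).1, hqj⟩))
    have hp₀mem : p₀ ∈ Fset T (lo p₀) (n - 1) := mem_Fset.mpr ⟨hp₀T, le_rfl, by omega⟩
    rw [Finset.insert_eq_self.mpr (Finset.mem_union_right _ hp₀mem)] at hsub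
    have hb1 := boundH hspan' hnc hinj (lo p₀) 0 (lo p₀) (by omega)
    have hb2 := boundH hspan' hnc hinj (n - 1 - lo p₀) (lo p₀) (n - 1) le_rfl
    have hcle := Finset.card_le_card hsub
    have hcun := Finset.card_union_le (Fset T 0 (lo p₀)) (Fset T (lo p₀) (n - 1))
    have hfull1 : lo p₀ - 1 ≤ (Fset T 0 (lo p₀)).card := by omega
    have hfull2 : (n - 1) - lo p₀ - 1 ≤ (Fset T (lo p₀) (n - 1)).card := by omega
    -- an ear on the right side, with lo ≥ lo p₀
    have he₂ : ∃ p ∈ T, lo p₀ ≤ lo p ∧ hi p = lo p + 2 := by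
      by_cases hbig : lo p₀ + 3 ≤ n - 1
      · obtain ⟨p, hpT, h1, h2, h3⟩ :=
          earE hspan' hnc hinj (n - 1 - lo p₀) (lo p₀) (n - 1) le_rfl hbig hfull2
        exact ⟨p, hpT, h1, h3⟩
      · obtain ⟨p, hpT, h1, h2⟩ := closing hspan' hnc hinj (lo p₀) (n - 1) hc2 hfull2
        exact ⟨p, hpT, by omega, by omega⟩
    obtain ⟨e₂, he₂T, he₂lo, he₂ear⟩ := he₂
    by_cases hL2 : 2 ≤ lo p₀
    · -- an ear on the left side, with lo < lo p₀
      have he₁ : ∃ p ∈ T, lo p < lo p₀ ∧ hi p = lo p + 2 := by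
        by_cases hL3 : 3 ≤ lo p₀
        · obtain ⟨p, hpT, h1, h2, h3⟩ :=
            earE hspan' hnc hinj (lo p₀) 0 (lo p₀) (by omega) (by omega) hfull1
          exact ⟨p, hpT, by omega, h3⟩
        · obtain ⟨p, hpT, h1, h2⟩ := closing hspan' hnc hinj 0 (lo p₀) (by omega) hfull1
          exact ⟨p, hpT, by omega, by omega⟩
      obtain ⟨e₁, he₁T, he₁lt, he₁ear⟩ := he₁
      refine Finset.one_lt_card.mpr ⟨e₁, hmem2 e₁ he₁T (ear_len e₁ he₁T he₁ear),
        e₂, hmem2 e₂ he₂T (ear_len e₂ he₂T he₂ear), fun h => ?_⟩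
      have := congrArg lo h
      omega
    · -- lo p₀ = 1 : p₀ itself is a wrap ear
      have hwr : hi p₀ - lo p₀ = n - 2 := by omega
      refine Finset.one_lt_card.mpr ⟨e₂, hmem2 e₂ he₂T (ear_len e₂ he₂T he₂ear),
        p₀, hmem2 p₀ hp₀T (wrap_len p₀ hp₀T hwr), fun h => ?_⟩
      have h1 := congrArg lo h
      have h2 := congrArg hi h
      omega
  · -- no chord ends at n - 1 : all chords fit in [0, n - 2]
    push_neg at hA
    have hT0 : ∀ p ∈ T, p ∈ Fset T 0 (n - 2) := by
      intro p hp
      have h1 := hi_lt (n := n) p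
      have h2 := hA p hp
      exact mem_Fset.mpr ⟨hp, by omega, by omega⟩
    have hcard0 : n - 3 ≤ (Fset T 0 (n - 2)).card := by
      rw [← hcard]
      exact Finset.card_le_card hT0
    obtain ⟨p₀, hp₀T, hp₀lo, hp₀hi⟩ :=
      closing hspan' hnc hinj 0 (n - 2) (by omega) (by omega)
    have hwr : hi p₀ - lo p₀ = n - 2 := by omega
    obtain ⟨e₁, he₁T, h1, h2, he₁ear⟩ :=
      earE hspan' hnc hinj (n - 2) 0 (n - 2) (by omega) (by omega) (by omega)
    refine Finset.one_lt_card.mpr ⟨e₁, hmem2 e₁ he₁T (ear_len e₁ he₁T he₁ear),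
      p₀, hmem2 p₀ hp₀T (wrap_len p₀ hp₀T hwr), fun h => ?_⟩
    have h3 := congrArg lo h
    have h4 := congrArg hi h
    omega

end TwoEarsAux


/-- **two ears theorem.** For `n ≥ 5`, every triangulation of the `n`-gon
contains at least two chords of length 2 (ears). -/
theorem two_ears (n : ℕ) (hn : 5 ≤ n) (T : Finset (Sym2 (ZMod n)))
    (hT : IsTriangulation n T) :
    2 ≤ (T.filter (fun p => chordLen p = 2)).card :=
  TwoEarsAux.main_two_ears n hn T hT.1 hT.2.1 hT.2.2
end
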